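/- arXiv:1205.4275 — 4 statements merged into one kernel-verified Lean document; each statement's English description precedes it below -/
import Mathlib

section
/- Let θ be a regular uncountable cardinal with the partition property θ → (θ)²₂, i.e., every function f : [θ]² → 2 is constant on [A]² for some A ⊆ θ of cardinality θ. Then θ is threadable: every coherent sequence ⟨C_α : α < θ, α limit⟩ (each C_α club in α, with C_β = C_α ∩ β for limit points β of C_α) admits a thread, i.e., a club E ⊆ θ with E ∩ α = C_α for every limit point α of E. In particular, □(θ) fails. -/
noncomputable section
open Ordinal Set

/-- `β` is a limit point of the set of ordinals `C`. -/
def IsLimitPoint (C : Set Ordinal.{0}) (β : Ordinal.{0}) : Prop :=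
  0 < β ∧ β = sSup (C ∩ Set.Iio β)

/-- `C` is a closed unbounded (club) subset of `α`. -/
def IsClubIn (C : Set Ordinal.{0}) (α : Ordinal.{0}) : Prop :=
  (∀ β ∈ C, β < α) ∧ (∀ ξ < α, ∃ β ∈ C, ξ ≤ β) ∧
  (∀ β, β < α → IsLimitPoint C β → β ∈ C)

/-- The order type of a set of ordinals. -/
def otp (C : Set Ordinal.{0}) : Ordinal.{1} :=
  Ordinal.type ((· < ·) : C → C → Prop)

namespace WCThread
open Cardinal

/-! ### Limit point helper lemmas -/

theorem isLimitPoint_forall {S : Set Ordinal.{0}} {α : Ordinal.{0}} (h : IsLimitPoint S α) :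
    ∀ v < α, ∃ x, x ∈ S ∧ v < x ∧ x < α := by
  intro v hv
  by_contra hcon
  push_neg at hcon
  obtain ⟨h0, hsup⟩ := h
  have hub : ∀ y ∈ S ∩ Set.Iio α, y ≤ v := by
    rintro y ⟨hyS, hylt⟩
    by_contra hy
    exact absurd hylt (not_lt.mpr (hcon y hyS (not_le.mp hy)))
  have hle : sSup (S ∩ Set.Iio α) ≤ v := csSup_le' hub
  rw [← hsup] at hle
  exact absurd hle (not_le.mpr hv)

theorem isLimitPoint_intro {S : Set Ordinal.{0}} {α : Ordinal.{0}} (h0 : 0 < α)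
    (h : ∀ v < α, ∃ x, x ∈ S ∧ v < x ∧ x < α) : IsLimitPoint S α := by
  refine ⟨h0, le_antisymm ?_ ?_⟩
  · refine le_of_forall_lt fun v hv => ?_
    obtain ⟨x, hxS, hvx, hxα⟩ := h v hv
    exact lt_of_lt_of_le hvx (le_csSup ⟨α, fun y hy => le_of_lt hy.2⟩ ⟨hxS, hxα⟩)
  · exact csSup_le' fun y hy => le_of_lt hy.2

/-! ### The tail filter -/

/-- `Ut θ A P` : `P` holds on a tail of `A` below `θ.ord`. -/
def Ut (θ : Cardinal.{0}) (A : Set Ordinal.{0}) (P : Ordinal.{0} → Prop) : Prop :=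
  ∃ γ, γ < θ.ord ∧ ∀ β ∈ A, γ ≤ β → P β

variable {θ : Cardinal.{0}} {A : Set Ordinal.{0}}

theorem Ut.mono {P Q : Ordinal.{0} → Prop} (h : Ut θ A P)
    (hPQ : ∀ β ∈ A, P β → Q β) : Ut θ A Q :=
  let ⟨γ, h1, h2⟩ := h
  ⟨γ, h1, fun β hβ hγ => hPQ β hβ (h2 β hβ hγ)⟩

theorem Ut.and {P Q : Ordinal.{0} → Prop} (hP : Ut θ A P) (hQ : Ut θ A Q) :
    Ut θ A (fun β => P β ∧ Q β) := by
  obtain ⟨γ1, hγ1, h1⟩ := hP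
  obtain ⟨γ2, hγ2, h2⟩ := hQ
  exact ⟨max γ1 γ2, max_lt hγ1 hγ2, fun β hβ hγ =>
    ⟨h1 β hβ ((le_max_left _ _).trans hγ), h2 β hβ ((le_max_right _ _).trans hγ)⟩⟩

/-- A subset of `Iio θ.ord` of full size `θ` is unbounded. -/
theorem unbounded_of_mk (hreg : θ.IsRegular) (hA : A ⊆ Set.Iio θ.ord)
    (hmk : Cardinal.mk A = Cardinal.lift.{1} θ) : ∀ ξ < θ.ord, ∃ β ∈ A, ξ < β := by
  have hlim : Order.IsSuccLimit θ.ord := Cardinal.isSuccLimit_ord hreg.aleph0_le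
  intro ξ hξ
  by_contra hcon
  push_neg at hcon
  have hsub : A ⊆ Set.Iio (Order.succ ξ) := fun β hβ => Order.lt_succ_iff.mpr (hcon β hβ)
  have h2 : Cardinal.mk A ≤ Cardinal.mk (Set.Iio (Order.succ ξ)) := mk_le_mk_of_subset hsub
  rw [hmk, Ordinal.mk_Iio_ordinal] at h2
  have h3 : θ ≤ (Order.succ ξ).card := Cardinal.lift_le.mp h2
  have h4 : (Order.succ ξ).card < θ := Cardinal.lt_ord.mp (hlim.succ_lt hξ)
  exact absurd h3 (not_le.mpr h4)

theorem Ut.exists (hreg : θ.IsRegular) (hA : A ⊆ Set.Iio θ.ord)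
    (hmk : Cardinal.mk A = Cardinal.lift.{1} θ) {P : Ordinal.{0} → Prop}
    (h : Ut θ A P) : ∃ β ∈ A, P β := by
  obtain ⟨γ, hγ, hP⟩ := h
  obtain ⟨β, hβ, hb⟩ := unbounded_of_mk hreg hA hmk γ hγ
  exact ⟨β, hβ, hP β hβ hb.le⟩

/-- Bounding a `<θ.ord`-indexed family of ordinals below `θ.ord` using regularity. -/
theorem tail_sup (hreg : θ.IsRegular) {x : Ordinal.{0}} (hx : x < θ.ord)
    (G : Set.Iio x → Ordinal.{0}) (hG : ∀ v, G v < θ.ord) :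
    ∃ γ, γ < θ.ord ∧ ∀ v, G v ≤ γ := by
  let f : x.ToType → Ordinal.{0} := fun i => G ((Ordinal.ToType.mk (o := x)).symm i)
  have hb : iSup f < θ.ord := by
    refine Cardinal.iSup_lt_ord_of_isRegular hreg ?_ fun i => hG _
    rw [Cardinal.mk_toType]
    exact Cardinal.lt_ord.mp hx
  refine ⟨iSup f, hb, fun v => ?_⟩
  have h1 : G v = f ((Ordinal.ToType.mk (o := x)) v) := by simp [f]
  rw [h1]
  exact le_ciSup (Ordinal.bddAbove_range f) _

theorem Ut.iInter (hreg : θ.IsRegular) {x : Ordinal.{0}} (hx : x < θ.ord)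
    {P : Ordinal.{0} → Ordinal.{0} → Prop} (h : ∀ v < x, Ut θ A (P v)) :
    Ut θ A (fun β => ∀ v < x, P v β) := by
  have h' : ∀ v : Set.Iio x, ∃ γ, γ < θ.ord ∧ ∀ β ∈ A, γ ≤ β → P v.1 β :=
    fun v => h v.1 v.2
  choose G hG1 hG2 using h'
  obtain ⟨γ, hγ, hbd⟩ := tail_sup hreg hx G hG1
  exact ⟨γ, hγ, fun β hβ hγβ v hv => hG2 ⟨v, hv⟩ β hβ ((hbd ⟨v, hv⟩).trans hγβ)⟩

theorem Ut.iInter_nat (hreg : θ.IsRegular) (hunc : Cardinal.aleph0 < θ)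
    {P : ℕ → Ordinal.{0} → Prop} (h : ∀ n, Ut θ A (P n)) :
    Ut θ A (fun β => ∀ n, P n β) := by
  choose G hG1 hG2 using h
  have hb : iSup G < θ.ord := by
    refine Cardinal.iSup_lt_ord_of_isRegular hreg ?_ hG1
    rw [Cardinal.mk_nat]
    exact hunc
  exact ⟨iSup G, hb, fun β hβ hγβ n =>
    hG2 n β hβ ((le_ciSup (Ordinal.bddAbove_range G) n).trans hγβ)⟩

/-! ### The least-difference coloring and the stabilization (decision) lemma -/

open scoped Classical in
/-- The least index at which the `X`-patterns of `α` and `β` differ. -/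
def diffLeast (X : Ordinal.{0} → Set Ordinal.{0}) (α β : Ordinal.{0}) : Ordinal.{0} :=
  sInf {a | ¬(α ∈ X a ↔ β ∈ X a)}

open scoped Classical in
/-- The Sierpiński-style coloring associated to a family of sets. -/
def colF (X : Ordinal.{0} → Set Ordinal.{0}) (α β : Ordinal.{0}) : Fin 2 :=
  if α ∈ X (diffLeast X α β) then 1 else 0

/-- On a homogeneous set, membership in each `X a`, `a < θ.ord`, stabilizes on a tail. -/
theorem Ut.decide (hreg : θ.IsRegular) {X : Ordinal.{0} → Set Ordinal.{0}}
    (hA : A ⊆ Set.Iio θ.ord) (hmk : Cardinal.mk A = Cardinal.lift.{1} θ) {c : Fin 2}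
    (hhom : ∀ α ∈ A, ∀ β ∈ A, α < β → colF X α β = c) :
    ∀ a < θ.ord, Ut θ A (fun β => β ∈ X a) ∨ Ut θ A (fun β => β ∉ X a) := by
  have hlim : Order.IsSuccLimit θ.ord := Cardinal.isSuccLimit_ord hreg.aleph0_le
  have hpos : (0 : Ordinal.{0}) < θ.ord := hlim.pos
  have hub := unbounded_of_mk hreg hA hmk
  -- main induction: pairwise tail agreement strictly below `a`
  have key : ∀ a, a < θ.ord → ∃ γ, γ < θ.ord ∧ ∀ β ∈ A, γ ≤ β → ∀ β' ∈ A, γ ≤ β' →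
      ∀ a' < a, (β ∈ X a' ↔ β' ∈ X a') := by
    intro a
    induction a using Ordinal.induction with
    | h a IH =>
      intro ha
      rcases Ordinal.zero_or_succ_or_isSuccLimit a with rfl | ⟨b, rfl⟩ | hlima
      · exact ⟨0, hpos, fun β _ _ β' _ _ a' ha' => absurd ha' (by simp)⟩
      · -- successor case
        obtain ⟨γb, hγb, hAgr⟩ := IH b (Order.lt_succ b) ((Order.lt_succ b).trans ha)
        have keypair : ∀ β ∈ A, γb ≤ β → ∀ β' ∈ A, γb ≤ β' → β < β' →
            ¬(β ∈ X b ↔ β' ∈ X b) → ((β ∈ X b) ↔ c = 1) := by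
          intro β hβ hγ β' hβ' hγ' hlt hdiff
          have hne : {a0 | ¬(β ∈ X a0 ↔ β' ∈ X a0)}.Nonempty := ⟨b, hdiff⟩
          have hmem := csInf_mem hne
          have hle : diffLeast X β β' ≤ b := csInf_le' hdiff
          have heq : diffLeast X β β' = b := by
            rcases lt_or_eq_of_le hle with hlt' | h'
            · exact absurd (hAgr β hβ hγ β' hβ' hγ' _ hlt') hmem
            · exact h'
          have hcol := hhom β hβ β' hβ' hlt
          rw [colF, heq] at hcol
          by_cases hm : β ∈ X b
          · rw [if_pos hm] at hcol
            exact ⟨fun _ => hcol.symm, fun _ => hm⟩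
          · rw [if_neg hm] at hcol
            refine ⟨fun h1 => absurd h1 hm, fun h1 => ?_⟩
            rw [← hcol] at h1
            exact absurd h1 (by decide)
        by_cases hex : ∃ β₀, β₀ ∈ A ∧ γb ≤ β₀ ∧ ¬((β₀ ∈ X b) ↔ c = 1)
        · obtain ⟨β₀, hβ₀A, hβ₀γ, hβ₀⟩ := hex
          have hβ₀lt : β₀ < θ.ord := hA hβ₀A
          refine ⟨max γb (Order.succ β₀), max_lt hγb (hlim.succ_lt hβ₀lt), ?_⟩
          have hsame : ∀ β ∈ A, max γb (Order.succ β₀) ≤ β → (β ∈ X b ↔ β₀ ∈ X b) := by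
            intro β hβ hγ
            have h1 : γb ≤ β := le_trans (le_max_left _ _) hγ
            have h2 : β₀ < β := lt_of_lt_of_le (Order.lt_succ β₀) (le_trans (le_max_right _ _) hγ)
            by_contra hd
            exact hβ₀ (keypair β₀ hβ₀A hβ₀γ β hβ h1 h2 (fun hif => hd hif.symm))
          intro β hβ hγ β' hβ' hγ' a' ha'
          rcases (Order.lt_succ_iff.mp ha').lt_or_eq with ha'' | rfl
          · exact hAgr β hβ (le_trans (le_max_left _ _) hγ) β' hβ'
              (le_trans (le_max_left _ _) hγ') a' ha''
          · exact (hsame β hβ hγ).trans (hsame β' hβ' hγ').symm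
        · push_neg at hex
          refine ⟨γb, hγb, fun β hβ hγ β' hβ' hγ' a' ha' => ?_⟩
          rcases (Order.lt_succ_iff.mp ha').lt_or_eq with ha'' | rfl
          · exact hAgr β hβ hγ β' hβ' hγ' a' ha''
          · exact (hex β hβ hγ).trans (hex β' hβ' hγ').symm
      · -- limit case
        have h' : ∀ v : Set.Iio a, ∃ γ, γ < θ.ord ∧ ∀ β ∈ A, γ ≤ β → ∀ β' ∈ A, γ ≤ β' →
            ∀ a' < Order.succ v.1, (β ∈ X a' ↔ β' ∈ X a') := by
          intro v
          exact IH (Order.succ v.1) (hlima.succ_lt v.2) ((hlima.succ_lt v.2).trans ha)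
        choose G hG1 hG2 using h'
        obtain ⟨γ, hγ, hbd⟩ := tail_sup hreg ha G hG1
        refine ⟨γ, hγ, fun β hβ hγβ β' hβ' hγβ' a' ha' => ?_⟩
        exact hG2 ⟨a', ha'⟩ β hβ ((hbd _).trans hγβ) β' hβ' ((hbd _).trans hγβ') a'
          (Order.lt_succ a')
  intro a ha
  obtain ⟨γ, hγ, hAgr⟩ := key (Order.succ a) (hlim.succ_lt ha)
  obtain ⟨β₀, hβ₀A, hβ₀γ⟩ : ∃ β ∈ A, γ ≤ β := by
    obtain ⟨β, hβ, hb⟩ := hub γ hγ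
    exact ⟨β, hβ, hb.le⟩
  by_cases h : β₀ ∈ X a
  · exact Or.inl ⟨γ, hγ, fun β hβ hγβ =>
      (hAgr β hβ hγβ β₀ hβ₀A hβ₀γ a (Order.lt_succ a)).mpr h⟩
  · exact Or.inr ⟨γ, hγ, fun β hβ hγβ hc =>
      h ((hAgr β hβ hγβ β₀ hβ₀A hβ₀γ a (Order.lt_succ a)).mp hc)⟩

/-! ### Codes for ordinal functions generated from the club system -/

/-- Codes: finite words over `Option (Iio θ.ord)`. -/
abbrev Code (θ : Cardinal.{0}) := List (Option ↥(Set.Iio θ.ord))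

open scoped Classical in
/-- Next element of `C (g β)` above `a` (junk value `0` outside the guard). -/
def nxt (θ : Cardinal.{0}) (C : Ordinal.{0} → Set Ordinal.{0}) (a : Ordinal.{0})
    (g : Ordinal.{0} → Ordinal.{0}) : Ordinal.{0} → Ordinal.{0} := fun β =>
  if a < g β ∧ g β < θ.ord ∧ Order.IsSuccLimit (g β) then sInf {w | w ∈ C (g β) ∧ a < w} else 0

/-- Evaluation of codes. -/
def evc (θ : Cardinal.{0}) (C : Ordinal.{0} → Set Ordinal.{0}) :
    Code θ → Ordinal.{0} → Ordinal.{0}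
  | [] => fun β => β
  | (none :: l) => fun β => Ordinal.pred (evc θ C l β)
  | (some a :: l) => nxt θ C a.1 (evc θ C l)

theorem nxt_spec {θ : Cardinal.{0}} {C : Ordinal.{0} → Set Ordinal.{0}}
    (hclub : ∀ α, α < θ.ord → Order.IsSuccLimit α → IsClubIn (C α) α)
    {a : Ordinal.{0}} {g : Ordinal.{0} → Ordinal.{0}} {β : Ordinal.{0}}
    (h1 : a < g β) (h2 : g β < θ.ord) (h3 : Order.IsSuccLimit (g β)) :
    nxt θ C a g β ∈ C (g β) ∧ a < nxt θ C a g β ∧ nxt θ C a g β < g β := by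
  classical
  rw [nxt, if_pos ⟨h1, h2, h3⟩]
  obtain ⟨hSub, hUnb, _⟩ := hclub (g β) h2 h3
  obtain ⟨w, hwC, hw⟩ := hUnb (Order.succ a) (h3.succ_lt h1)
  have hne : {w | w ∈ C (g β) ∧ a < w}.Nonempty :=
    ⟨w, hwC, lt_of_lt_of_le (Order.lt_succ a) hw⟩
  have hmem := csInf_mem hne
  exact ⟨hmem.1, hmem.2, hSub _ hmem.1⟩

theorem evc_lt {θ : Cardinal.{0}} {C : Ordinal.{0} → Set Ordinal.{0}}
    (hclub : ∀ α, α < θ.ord → Order.IsSuccLimit α → IsClubIn (C α) α)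
    (hpos : (0 : Ordinal.{0}) < θ.ord) :
    ∀ (l : Code θ) (β : Ordinal.{0}), β < θ.ord → evc θ C l β < θ.ord := by
  intro l
  induction l with
  | nil => intro β hβ; exact hβ
  | cons o l IH =>
    intro β hβ
    match o with
    | none =>
      exact lt_of_le_of_lt (Ordinal.pred_le_self _) (IH β hβ)
    | some a =>
      show nxt θ C a.1 (evc θ C l) β < θ.ord
      classical
      by_cases hg : a.1 < evc θ C l β ∧ evc θ C l β < θ.ord ∧ Order.IsSuccLimit (evc θ C l β)
      · exact lt_trans (nxt_spec hclub hg.1 hg.2.1 hg.2.2).2.2 hg.2.1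
      · rw [nxt, if_neg hg]; exact hpos

/-- The five kinds of sets in our family. -/
def famS (θ : Cardinal.{0}) (C : Ordinal.{0} → Set Ordinal.{0}) (k : Fin 5) (l : Code θ)
    (x v : Ordinal.{0}) : Set Ordinal.{0} :=
  if k = 0 then {β | x ∈ C (evc θ C l β)}
  else if k = 1 then {β | evc θ C l β = x}
  else if k = 2 then {β | Order.IsSuccLimit (evc θ C l β)}
  else if k = 3 then {β | ∃ w, v < w ∧ w < x ∧ w ∈ C (evc θ C l β)}
  else {β | x < evc θ C l β}

/-- Surjection from cardinality inequality. -/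
theorem exists_surj {α β : Type 1} [Nonempty α] (h : Cardinal.mk α ≤ Cardinal.mk β) :
    ∃ s : β → α, Function.Surjective s := by
  obtain ⟨f⟩ := (Cardinal.le_def α β).mp h
  exact ⟨Function.invFun f, Function.invFun_surjective f.injective⟩

/-- The index type for the family. -/
abbrev Idx (θ : Cardinal.{0}) := ULift.{1} (Fin 5) × Code θ × ↥(Set.Iio θ.ord) × ↥(Set.Iio θ.ord)

theorem mk_idx_le {θ : Cardinal.{0}} (hunc : Cardinal.aleph0 < θ) :
    Cardinal.mk (Idx θ) ≤ Cardinal.lift.{1} θ := by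
  have hκa : Cardinal.aleph0 ≤ Cardinal.lift.{1} θ := by
    rw [← Cardinal.lift_aleph0.{1, 0}]
    exact Cardinal.lift_le.mpr hunc.le
  have hκ : Cardinal.mk ↥(Set.Iio θ.ord) = Cardinal.lift.{1} θ := by
    rw [Ordinal.mk_Iio_ordinal, Cardinal.card_ord]
  have hOpt : Cardinal.mk (Option ↥(Set.Iio θ.ord)) = Cardinal.lift.{1} θ := by
    rw [Cardinal.mk_option, hκ, Cardinal.add_one_eq hκa]
  haveI : Infinite (Option ↥(Set.Iio θ.ord)) := by
    rw [Cardinal.infinite_iff, hOpt]; exact hκa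
  have hList : Cardinal.mk (Code θ) = Cardinal.lift.{1} θ := by
    rw [Cardinal.mk_list_eq_mk, hOpt]
  have h5 : Cardinal.mk (ULift.{1} (Fin 5)) ≤ Cardinal.lift.{1} θ := by
    rw [Cardinal.mk_uLift]
    refine Cardinal.lift_le.mpr ?_
    rw [Cardinal.mk_fin]
    exact le_trans (le_of_lt (Cardinal.nat_lt_aleph0 5)) hunc.le
  have hmul : Cardinal.lift.{1} θ * Cardinal.lift.{1} θ = Cardinal.lift.{1} θ :=
    Cardinal.mul_eq_self hκa
  have step : ∀ (α β : Type 1), Cardinal.mk α ≤ Cardinal.lift.{1} θ →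
      Cardinal.mk β ≤ Cardinal.lift.{1} θ → Cardinal.mk (α × β) ≤ Cardinal.lift.{1} θ := by
    intro α β h1 h2
    rw [Cardinal.mk_prod, Cardinal.lift_id, Cardinal.lift_id]
    calc Cardinal.mk α * Cardinal.mk β ≤ Cardinal.lift.{1} θ * Cardinal.lift.{1} θ :=
          mul_le_mul' h1 h2
      _ = Cardinal.lift.{1} θ := hmul
  exact step _ _ h5 (step _ _ hList.le (step _ _ hκ.le hκ.le))

end WCThread

open WCThread in
/-- A regular uncountable cardinal with the partition property θ → (θ)²₂ is threadable:
every coherent club sequence on θ has a thread, so □(θ) fails. -/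
theorem weaklyCompact_threadable (θ : Cardinal.{0}) (hreg : θ.IsRegular)
    (hunc : Cardinal.aleph0 < θ)
    (hpart : ∀ f : Ordinal.{0} → Ordinal.{0} → Fin 2,
      ∃ A : Set Ordinal.{0}, A ⊆ Set.Iio θ.ord ∧
        Cardinal.mk A = Cardinal.lift.{1} θ ∧
        ∃ c : Fin 2, ∀ α ∈ A, ∀ β ∈ A, α < β → f α β = c)
    (C : Ordinal.{0} → Set Ordinal.{0})
    (hclub : ∀ α, α < θ.ord → Order.IsSuccLimit α → IsClubIn (C α) α)
    (hcoh : ∀ α, α < θ.ord → Order.IsSuccLimit α →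
      ∀ β, β < α → IsLimitPoint (C α) β → C β = C α ∩ Set.Iio β) :
    ∃ E : Set Ordinal.{0}, IsClubIn E θ.ord ∧
      ∀ α, α < θ.ord → IsLimitPoint E α → E ∩ Set.Iio α = C α := by
  classical
  have hlim : Order.IsSuccLimit θ.ord := Cardinal.isSuccLimit_ord hreg.aleph0_le
  have hpos : (0 : Ordinal.{0}) < θ.ord := hlim.pos
  -- a surjective enumeration of the index type by ordinals below `θ.ord`
  haveI : Nonempty (Idx θ) := ⟨⟨⟨0⟩, [], ⟨0, hpos⟩, ⟨0, hpos⟩⟩⟩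
  have hκ : Cardinal.mk ↥(Set.Iio θ.ord) = Cardinal.lift.{1} θ := by
    rw [Ordinal.mk_Iio_ordinal, Cardinal.card_ord]
  obtain ⟨s, hs⟩ := exists_surj (α := Idx θ) (β := ↥(Set.Iio θ.ord))
    (le_trans (mk_idx_le hunc) hκ.symm.le)
  set X : Ordinal.{0} → Set Ordinal.{0} := fun a =>
    if h : a < θ.ord then
      famS θ C (s ⟨a, h⟩).1.down (s ⟨a, h⟩).2.1 (s ⟨a, h⟩).2.2.1.1 (s ⟨a, h⟩).2.2.2.1
    else ∅ with hX
  obtain ⟨A, hA, hmk, c, hhom⟩ := hpart (colF X)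
  have hub := unbounded_of_mk hreg hA hmk
  have hUex : ∀ {P : Ordinal.{0} → Prop}, Ut θ A P → ∃ β ∈ A, P β :=
    fun h => h.exists hreg hA hmk
  have hdecX := Ut.decide hreg hA hmk hhom
  have hdec : ∀ (k : Fin 5) (l : Code θ) (x v : ↥(Set.Iio θ.ord)),
      Ut θ A (fun β => β ∈ famS θ C k l x.1 v.1) ∨
      Ut θ A (fun β => β ∉ famS θ C k l x.1 v.1) := by
    intro k l x v
    obtain ⟨b, hb⟩ := hs ⟨⟨k⟩, l, x, v⟩
    have hb2 : (b : Ordinal.{0}) < θ.ord := b.2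
    have hXb : X b.1 = famS θ C k l x.1 v.1 := by
      rw [hX]
      simp only
      rw [dif_pos hb2]
      show famS θ C (s b).1.down (s b).2.1 (s b).2.2.1.1 (s b).2.2.2.1 = _
      rw [hb]
    have := hdecX b.1 b.2
    rw [hXb] at this
    exact this
  -- the five decision instances
  have dMem : ∀ (l : Code θ) (x : Ordinal.{0}), x < θ.ord →
      Ut θ A (fun β => x ∈ C (evc θ C l β)) ∨ Ut θ A (fun β => x ∉ C (evc θ C l β)) := by
    intro l x hx
    have := hdec 0 l ⟨x, hx⟩ ⟨0, hpos⟩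
    simpa [famS] using this
  have dEq : ∀ (l : Code θ) (x : Ordinal.{0}), x < θ.ord →
      Ut θ A (fun β => evc θ C l β = x) ∨ Ut θ A (fun β => ¬(evc θ C l β = x)) := by
    intro l x hx
    have := hdec 1 l ⟨x, hx⟩ ⟨0, hpos⟩
    simpa [famS] using this
  have dLim : ∀ (l : Code θ),
      Ut θ A (fun β => Order.IsSuccLimit (evc θ C l β)) ∨ Ut θ A (fun β => ¬Order.IsSuccLimit (evc θ C l β)) := by
    intro l
    have := hdec 2 l ⟨0, hpos⟩ ⟨0, hpos⟩
    simpa [famS] using this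
  have dEx : ∀ (l : Code θ) (x : Ordinal.{0}), x < θ.ord → ∀ (v : Ordinal.{0}), v < θ.ord →
      Ut θ A (fun β => ∃ w, v < w ∧ w < x ∧ w ∈ C (evc θ C l β)) ∨
      Ut θ A (fun β => ¬∃ w, v < w ∧ w < x ∧ w ∈ C (evc θ C l β)) := by
    intro l x hx v hv
    have := hdec 3 l ⟨x, hx⟩ ⟨v, hv⟩
    simpa [famS] using this
  have dLt : ∀ (l : Code θ) (x : Ordinal.{0}), x < θ.ord →
      Ut θ A (fun β => x < evc θ C l β) ∨ Ut θ A (fun β => ¬(x < evc θ C l β)) := by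
    intro l x hx
    have := hdec 4 l ⟨x, hx⟩ ⟨0, hpos⟩
    simpa [famS] using this
  -- the set of codes whose value dominates all constants on a tail
  set SS : Set (Code θ) := {l | ∀ x, x < θ.ord → Ut θ A (fun β => x < evc θ C l β)} with hSS
  have hnil : ([] : Code θ) ∈ SS := by
    intro x hx
    exact ⟨Order.succ x, hlim.succ_lt hx, fun β hβ hγ =>
      lt_of_lt_of_le (Order.lt_succ x) hγ⟩
  -- well-foundedness of eventual domination on SS
  haveI hirr : IsIrrefl ↥SS (fun (p q : ↥SS) =>
      Ut θ A (fun β => evc θ C p.1 β < evc θ C q.1 β)) :=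
    ⟨fun p h => by obtain ⟨β, _, hβ⟩ := hUex h; exact lt_irrefl _ hβ⟩
  haveI htrans : IsTrans ↥SS (fun (p q : ↥SS) =>
      Ut θ A (fun β => evc θ C p.1 β < evc θ C q.1 β)) :=
    ⟨fun p q r h1 h2 => (h1.and h2).mono (fun β _ hh => lt_trans hh.1 hh.2)⟩
  haveI hso : IsStrictOrder ↥SS (fun (p q : ↥SS) =>
      Ut θ A (fun β => evc θ C p.1 β < evc θ C q.1 β)) := ⟨⟩
  have hwf : WellFounded (fun (p q : ↥SS) =>
      Ut θ A (fun β => evc θ C p.1 β < evc θ C q.1 β)) := by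
    rw [RelEmbedding.wellFounded_iff_isEmpty]
    constructor
    intro f
    have hstep : ∀ n : ℕ, Ut θ A (fun β => evc θ C (f (n+1)).1 β < evc θ C (f n).1 β) :=
      fun n => f.map_rel_iff.mpr (Nat.lt_succ_self n)
    obtain ⟨β, hβA, hβ⟩ := hUex (Ut.iInter_nat hreg hunc hstep)
    have hne : (Set.range (fun n => evc θ C (f n).1 β)).Nonempty := ⟨_, ⟨0, rfl⟩⟩
    obtain ⟨n, hn⟩ := Ordinal.lt_wf.min_mem _ hne
    exact Ordinal.lt_wf.not_lt_min _ (Set.mem_range_self (n+1)) (by rw [← hn]; exact hβ n)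
  -- the minimal element g*
  obtain ⟨gm, -, hgmin⟩ := hwf.has_min Set.univ ⟨⟨[], hnil⟩, trivial⟩
  set g₀ : Code θ := gm.1 with hg₀
  have hgS : ∀ x, x < θ.ord → Ut θ A (fun β => x < evc θ C g₀ β) := gm.2
  have hgmin' : ∀ l (hl : l ∈ SS), ¬ Ut θ A (fun β => evc θ C l β < evc θ C g₀ β) :=
    fun l hl h => hgmin ⟨l, hl⟩ trivial h
  -- constancy from non-domination
  have hconst : ∀ l : Code θ, ¬ (l ∈ SS) →
      ∃ y, y < θ.ord ∧ Ut θ A (fun β => evc θ C l β = y) := by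
    intro l hl
    rw [hSS] at hl
    simp only [Set.mem_setOf_eq] at hl
    push_neg at hl
    obtain ⟨x₀, hx₀, hnot⟩ := hl
    have hle : Ut θ A (fun β => ¬ (x₀ < evc θ C l β)) := by
      rcases dLt l x₀ hx₀ with h | h
      · exact absurd h hnot
      · exact h
    by_contra hcon
    push_neg at hcon
    have hne : ∀ y, y < Order.succ x₀ → Ut θ A (fun β => ¬(evc θ C l β = y)) := by
      intro y hy
      have hy' : y < θ.ord := lt_trans hy (hlim.succ_lt hx₀)
      rcases dEq l y hy' with h | h
      · exact absurd h (hcon y hy')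
      · exact h
    obtain ⟨β, hβA, h1, h2⟩ := hUex ((Ut.iInter hreg (hlim.succ_lt hx₀) hne).and hle)
    exact h1 (evc θ C l β) (Order.lt_succ_iff.mpr (not_lt.mp h2)) rfl
  -- the values of g* are limits on a tail
  have hfv : Ut θ A (fun β => evc θ C g₀ β < θ.ord) :=
    ⟨0, hpos, fun β hβ _ => evc_lt hclub hpos g₀ β (hA hβ)⟩
  have hglim : Ut θ A (fun β => Order.IsSuccLimit (evc θ C g₀ β)) := by
    rcases dLim g₀ with h | h
    · exact h
    · exfalso
      have h0 : Ut θ A (fun β => (0 : Ordinal.{0}) < evc θ C g₀ β) := hgS 0 hpos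
      have hsucc : Ut θ A (fun β => ∃ t, evc θ C g₀ β = Order.succ t) :=
        (h.and h0).mono (fun β _ hh => by
          rcases Ordinal.zero_or_succ_or_isSuccLimit (evc θ C g₀ β) with hz | hsx | hlx
          · rw [hz] at hh; exact absurd hh.2 (lt_irrefl 0)
          · obtain ⟨t, ht⟩ := hsx; exact ⟨t, ht.symm⟩
          · exact absurd hlx hh.1)
      have hplt : Ut θ A (fun β => evc θ C (none :: g₀) β < evc θ C g₀ β) :=
        hsucc.mono (fun β _ hh => by
          obtain ⟨t, ht⟩ := hh
          show Ordinal.pred (evc θ C g₀ β) < evc θ C g₀ β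
          rw [ht, Ordinal.pred_succ]
          exact Order.lt_succ t)
      have hpnot : (none :: g₀) ∉ SS := fun hpS => hgmin' _ hpS hplt
      obtain ⟨y, hy, hUy⟩ := hconst (none :: g₀) hpnot
      have hgsy : Ut θ A (fun β => evc θ C g₀ β = Order.succ y) :=
        (hUy.and hsucc).mono (fun β _ hh => by
          obtain ⟨hpy, t, ht⟩ := hh
          have : Ordinal.pred (evc θ C g₀ β) = y := hpy
          rw [ht, Ordinal.pred_succ] at this
          rw [ht, this])
      obtain ⟨β, hβA, h1, h2⟩ := hUex ((hgS (Order.succ y) (hlim.succ_lt hy)).and hgsy)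
      rw [h2] at h1
      exact lt_irrefl _ h1
  have hGuard : Ut θ A (fun β => Order.IsSuccLimit (evc θ C g₀ β) ∧ evc θ C g₀ β < θ.ord) :=
    hglim.and hfv
  -- the thread
  set E : Set Ordinal.{0} := {x | Ut θ A (fun β => x ∈ C (evc θ C g₀ β))} with hE
  have hmemE : ∀ x : Ordinal.{0}, x ∈ E ↔ Ut θ A (fun β => x ∈ C (evc θ C g₀ β)) :=
    fun x => Iff.rfl
  have hElt : ∀ x ∈ E, x < θ.ord := by
    intro x hx
    obtain ⟨β, hβA, h1, h2, h3⟩ := hUex (((hmemE x).mp hx).and hGuard)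
    exact lt_trans ((hclub _ h3 h2).1 x h1) h3
  have hUnb : ∀ ξ, ξ < θ.ord → ∃ y ∈ E, ξ < y := by
    intro ξ hξ
    have hwe : ∀ β, evc θ C ((some ⟨ξ, hξ⟩) :: g₀) β = nxt θ C ξ (evc θ C g₀) β :=
      fun β => rfl
    have hG : Ut θ A (fun β => ξ < evc θ C g₀ β ∧ Order.IsSuccLimit (evc θ C g₀ β) ∧
        evc θ C g₀ β < θ.ord) := (hgS ξ hξ).and hGuard
    have hw : Ut θ A (fun β => evc θ C ((some ⟨ξ, hξ⟩) :: g₀) β ∈ C (evc θ C g₀ β) ∧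
        ξ < evc θ C ((some ⟨ξ, hξ⟩) :: g₀) β ∧
        evc θ C ((some ⟨ξ, hξ⟩) :: g₀) β < evc θ C g₀ β) :=
      hG.mono (fun β _ hh => by
        rw [hwe]
        exact nxt_spec hclub hh.1 hh.2.2 hh.2.1)
    have hwnot : ((some ⟨ξ, hξ⟩) :: g₀) ∉ SS :=
      fun hwS => hgmin' _ hwS (hw.mono fun β _ hh => hh.2.2)
    obtain ⟨y, hy, hUy⟩ := hconst _ hwnot
    refine ⟨y, ?_, ?_⟩
    · refine (hmemE y).mpr ((hUy.and hw).mono (fun β _ hh => ?_))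
      obtain ⟨he, h1, _, _⟩ := hh
      rw [← he]
      exact h1
    · obtain ⟨β, hβA, he, _, h2, _⟩ := hUex (hUy.and hw)
      rw [← he]
      exact h2
  -- transfer of limit points
  have hPack : ∀ α, α < θ.ord → IsLimitPoint E α →
      Ut θ A (fun β => IsLimitPoint (C (evc θ C g₀ β)) α ∧ α < evc θ C g₀ β ∧
        Order.IsSuccLimit (evc θ C g₀ β) ∧ evc θ C g₀ β < θ.ord) := by
    intro α hα hlp
    have h0 : 0 < α := hlp.1
    have hcf : ∀ v < α, ∃ x, x ∈ E ∧ v < x ∧ x < α := isLimitPoint_forall hlp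
    have hSv : ∀ v < α, Ut θ A
        (fun β => ∃ w, v < w ∧ w < α ∧ w ∈ C (evc θ C g₀ β)) := by
      intro v hv
      rcases dEx g₀ α hα v (lt_trans hv hα) with h | h
      · exact h
      · exfalso
        obtain ⟨x, hxE, hvx, hxα⟩ := hcf v hv
        obtain ⟨β, hβA, h1, h2⟩ := hUex (((hmemE x).mp hxE).and h)
        exact h2 ⟨x, hvx, hxα, h1⟩
    refine ((Ut.iInter hreg hα hSv).and ((hgS α hα).and hGuard)).mono
      (fun β _ hh => ?_)
    obtain ⟨hpt, haα, hlimb, hltb⟩ := hh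
    refine ⟨isLimitPoint_intro h0 (fun v hv => ?_), haα, hlimb, hltb⟩
    obtain ⟨w, h1, h2, h3⟩ := hpt v hv
    exact ⟨w, h3, h1, h2⟩
  have hTrans : ∀ α, α < θ.ord → IsLimitPoint E α →
      Ut θ A (fun β => C α = C (evc θ C g₀ β) ∩ Set.Iio α) := by
    intro α hα hlp
    exact (hPack α hα hlp).mono (fun β _ hh => hcoh _ hh.2.2.2 hh.2.2.1 α hh.2.1 hh.1)
  have hMatch : ∀ α, α < θ.ord → IsLimitPoint E α → E ∩ Set.Iio α = C α := by
    intro α hα hlp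
    have hM := hTrans α hα hlp
    ext x
    constructor
    · rintro ⟨hxE, hxlt⟩
      obtain ⟨β, hβA, h1, h2⟩ := hUex (((hmemE x).mp hxE).and hM)
      rw [h2]
      exact ⟨h1, hxlt⟩
    · intro hxC
      have hxlt : x < α := by
        obtain ⟨β, hβA, h2⟩ := hUex hM
        have := hxC
        rw [h2] at this
        exact this.2
      refine ⟨(hmemE x).mpr (hM.mono (fun β _ h2 => ?_)), hxlt⟩
      have := hxC
      rw [h2] at this
      exact this.1
  have hClosed : ∀ b, b < θ.ord → IsLimitPoint E b → b ∈ E := by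
    intro b hb hlp
    refine (hmemE b).mpr ((hPack b hb hlp).mono (fun β _ hh => ?_))
    obtain ⟨hlpt, hbα, hlimb, hltb⟩ := hh
    exact (hclub _ hltb hlimb).2.2 b hbα hlpt
  refine ⟨E, ⟨hElt, ?_, hClosed⟩, hMatch⟩
  intro ξ hξ
  obtain ⟨y, hy, h⟩ := hUnb ξ hξ
  exact ⟨y, hy, h.le⟩
end
end

section
/- Let θ be a regular uncountable cardinal such that for every family S ⊆ P(θ) of cardinality θ there exists a θ-complete filter F on θ, containing all tails {ξ : ξ ≥ β} for β < θ, such that for each A ∈ S either A ∈ F or θ∖A ∈ F. Then θ is threadable: □(θ) fails, i.e., every coherent club sequence ⟨C_α : α < θ⟩ has a thread. -/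
noncomputable section
open Ordinal Set

namespace SqAux
open scoped Classical

variable (C : Ordinal.{0} → Set Ordinal.{0}) (θ : Cardinal.{0})

/-- Extension of the coherent sequence to all ordinals. -/
def Cx (α : Ordinal.{0}) : Set Ordinal.{0} :=
  if Order.IsSuccLimit α then C α else Set.Ico α.pred α

/-- minimum of `Cx C ζ` at or above `β+1`. -/
def mfun (β ζ : Ordinal.{0}) : Ordinal.{0} := sInf (Cx C ζ ∩ Set.Ici (β + 1))

/-- iterated min functions along a word -/
def fw : List Ordinal.{0} → Ordinal.{0} → Ordinal.{0}
  | [], α => α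
  | β :: w, α => mfun C β (fw w α)

lemma fw_cons (β : Ordinal) (w : List Ordinal) (α : Ordinal) :
    fw C (β :: w) α = mfun C β (fw C w α) := rfl

variable {θ} in
lemma Cx_subset (hclub : ∀ α, α < θ.ord → Order.IsSuccLimit α → IsClubIn (C α) α)
    {ζ : Ordinal} (hζ : ζ < θ.ord) : Cx C ζ ⊆ Set.Iio ζ := by
  unfold Cx
  split
  · exact fun x hx => (hclub ζ hζ ‹_›).1 x hx
  · exact fun x hx => hx.2

variable {θ} in
lemma mfun_mem (hclub : ∀ α, α < θ.ord → Order.IsSuccLimit α → IsClubIn (C α) α)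
    {β ζ : Ordinal} (hζ : ζ < θ.ord) (hβ : β + 1 < ζ) :
    mfun C β ζ ∈ Cx C ζ ∧ β + 1 ≤ mfun C β ζ ∧ mfun C β ζ < ζ := by
  have hne : (Cx C ζ ∩ Set.Ici (β + 1)).Nonempty := by
    rcases Ordinal.zero_or_succ_or_isSuccLimit ζ with h0 | ⟨a, rfl⟩ | hl
    · exact absurd hβ (by simp [h0])
    · refine ⟨a, ?_, ?_⟩
      · unfold Cx
        rw [if_neg (Order.not_isSuccLimit_succ a), Ordinal.pred_succ]
        exact ⟨le_refl a, Order.lt_succ a⟩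
      · exact Order.lt_succ_iff.mp hβ
    · obtain ⟨c, hc, hle⟩ := (hclub ζ hζ hl).2.1 (β + 1) hβ
      exact ⟨c, by unfold Cx; rw [if_pos hl]; exact hc, hle⟩
  have hmem := csInf_mem hne
  exact ⟨hmem.1, hmem.2, Cx_subset C hclub hζ hmem.1⟩

variable {θ} in
lemma fw_le (hclub : ∀ α, α < θ.ord → Order.IsSuccLimit α → IsClubIn (C α) α)
    (w : List Ordinal) {α : Ordinal} (hα : α < θ.ord) : fw C w α ≤ α := by
  induction w with
  | nil => exact le_refl _
  | cons β w ih =>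
    have h1 : fw C w α ≤ α := ih
    have hζθ : fw C w α < θ.ord := lt_of_le_of_lt h1 hα
    rw [fw_cons]
    by_cases hne : (Cx C (fw C w α) ∩ Set.Ici (β + 1)).Nonempty
    · have hmem := csInf_mem hne
      exact le_trans (le_of_lt (Cx_subset C hclub hζθ hmem.1)) h1
    · rw [Set.not_nonempty_iff_eq_empty] at hne
      unfold mfun
      rw [hne]
      simpa using le_trans (Ordinal.zero_le _) h1

lemma succ_no_LP {a γ : Ordinal} : ¬ IsLimitPoint (Set.Ico a (Order.succ a)) γ := by
  rintro ⟨h0, hsup⟩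
  rcases le_or_gt γ a with h | h
  · have he : Set.Ico a (Order.succ a) ∩ Set.Iio γ = ∅ := by
      ext x
      simp only [Set.mem_inter_iff, Set.mem_Ico, Set.mem_Iio, Set.mem_empty_iff_false, iff_false]
      rintro ⟨⟨hax, _⟩, hxγ⟩
      exact absurd (lt_of_lt_of_le hxγ h) (not_lt.mpr hax)
    rw [he, csSup_empty] at hsup
    rw [Ordinal.bot_eq_zero] at hsup
    exact h0.ne' hsup
  · have he : Set.Ico a (Order.succ a) ∩ Set.Iio γ = {a} := by
      ext x
      simp only [Set.mem_inter_iff, Set.mem_Ico, Set.mem_Iio, Set.mem_singleton_iff]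
      constructor
      · rintro ⟨⟨hax, hx⟩, _⟩
        exact le_antisymm (Order.lt_succ_iff.mp hx) hax
      · rintro rfl
        exact ⟨⟨le_refl _, Order.lt_succ _⟩, h⟩
    rw [he, csSup_singleton] at hsup
    exact absurd h (not_lt.mpr hsup.le)

lemma isLimit_of_LP {ζ γ : Ordinal} (h0 : ζ ≠ 0) (hLP : IsLimitPoint (Cx C ζ) γ) :
    Order.IsSuccLimit ζ := by
  rcases Ordinal.zero_or_succ_or_isSuccLimit ζ with h | ⟨a, rfl⟩ | h
  · exact absurd h h0
  · exfalso
    unfold Cx at hLP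
    rw [if_neg (Order.not_isSuccLimit_succ a), Ordinal.pred_succ] at hLP
    exact succ_no_LP hLP
  · exact h

/-! coding -/

abbrev II (θ : Cardinal.{0}) : Type 1 := ↥(Set.Iio θ.ord)

abbrev ICode (θ : Cardinal.{0}) : Type 1 := Bool × List (II θ) × II θ

lemma exists_equiv (hunc : Cardinal.aleph0 < θ) : Nonempty (ICode θ ≃ II θ) := by
  rw [← Cardinal.eq]
  have h1 : Cardinal.mk (II θ) = Cardinal.lift.{1} θ := by
    rw [show II θ = ↥(Set.Iio θ.ord) from rfl, Ordinal.mk_Iio_ordinal, Cardinal.card_ord]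
  have hinf : Cardinal.aleph0 ≤ Cardinal.mk (II θ) := by
    rw [h1, Cardinal.aleph0_le_lift]; exact hunc.le
  haveI : Infinite (II θ) := Cardinal.infinite_iff.mpr hinf
  have hL : Cardinal.mk (List (II θ)) = Cardinal.mk (II θ) := Cardinal.mk_list_eq_mk _
  rw [Cardinal.mk_prod, Cardinal.mk_prod, hL]
  simp only [Cardinal.lift_id, Cardinal.lift_uzero]
  rw [Cardinal.mul_eq_self hinf, Cardinal.mk_bool, Cardinal.lift_ofNat]
  have h2 : (2 : Cardinal.{1}) ≤ Cardinal.mk (II θ) :=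
    le_trans (le_of_lt (by exact_mod_cast Cardinal.nat_lt_aleph0 2)) hinf
  rw [mul_comm]
  exact Cardinal.mul_eq_left hinf h2 (by norm_num)

def fwI (w : List (II θ)) (α : Ordinal.{0}) : Ordinal.{0} :=
  fw C (w.map Subtype.val) α

def Lset (w : List (II θ)) (γ : Ordinal.{0}) : Set Ordinal.{0} :=
  {α | α < θ.ord ∧ fwI C θ w α ≤ γ}

def Pset (w : List (II θ)) (ξ : Ordinal.{0}) : Set Ordinal.{0} :=
  {α | α < θ.ord ∧ ξ ∈ Cx C (fwI C θ w α)}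

def interp (c : ICode θ) : Set Ordinal.{0} :=
  if c.1 then Lset C θ c.2.1 c.2.2.val else Pset C θ c.2.1 c.2.2.val

lemma interp_true (w : List (II θ)) (γ : II θ) :
    interp C θ (true, w, γ) = Lset C θ w γ.val := rfl

lemma interp_false (w : List (II θ)) (ξ : II θ) :
    interp C θ (false, w, ξ) = Pset C θ w ξ.val := by
  simp [interp]

def Afam (e : ICode θ ≃ II θ) (ξ : Ordinal.{0}) : Set Ordinal.{0} :=
  if h : ξ < θ.ord then interp C θ (e.symm ⟨ξ, h⟩) else ∅

lemma Afam_subset (e : ICode θ ≃ II θ) :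
    ∀ ξ, ξ < θ.ord → Afam C θ e ξ ⊆ Set.Iio θ.ord := by
  intro ξ hξ
  unfold Afam
  rw [dif_pos hξ]
  unfold interp
  split
  · exact fun α hα => hα.1
  · exact fun α hα => hα.1

lemma Afam_eq (e : ICode θ ≃ II θ) (c : ICode θ) :
    Afam C θ e ((e c : II θ) : Ordinal) = interp C θ c := by
  unfold Afam
  have h : ((e c : II θ) : Ordinal) < θ.ord := (e c).2
  rw [dif_pos h]
  rw [show (⟨((e c : II θ) : Ordinal), h⟩ : II θ) = e c from rfl, e.symm_apply_apply]

end SqAux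

open SqAux in
/-- The filter-extension property of weak compactness implies threadability:
□(θ) fails, i.e. every coherent club sequence on θ has a thread. -/
theorem filterProperty_threadable (θ : Cardinal.{0}) (hreg : θ.IsRegular)
    (hunc : Cardinal.aleph0 < θ)
    (hwc : ∀ A : Ordinal.{0} → Set Ordinal.{0},
      (∀ ξ, ξ < θ.ord → A ξ ⊆ Set.Iio θ.ord) →
      ∃ F : Set (Set Ordinal.{0}),
        ∅ ∉ F ∧
        (∀ X ∈ F, ∀ Y : Set Ordinal.{0}, X ⊆ Y → Y ∈ F) ∧
        (∀ δ, δ < θ.ord → ∀ f : Ordinal.{0} → Set Ordinal.{0},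
          (∀ i, i < δ → f i ∈ F) → (Set.Iio θ.ord ∩ ⋂ i ∈ Set.Iio δ, f i) ∈ F) ∧
        (∀ β, β < θ.ord → {ξ | β ≤ ξ ∧ ξ < θ.ord} ∈ F) ∧
        (∀ ξ, ξ < θ.ord → A ξ ∈ F ∨ (Set.Iio θ.ord \ A ξ) ∈ F))
    (C : Ordinal.{0} → Set Ordinal.{0})
    (hclub : ∀ α, α < θ.ord → Order.IsSuccLimit α → IsClubIn (C α) α)
    (hcoh : ∀ α, α < θ.ord → Order.IsSuccLimit α →
      ∀ β, β < α → IsLimitPoint (C α) β → C β = C α ∩ Set.Iio β) :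
    ∃ E : Set Ordinal.{0}, IsClubIn E θ.ord ∧
      ∀ α, α < θ.ord → IsLimitPoint E α → E ∩ Set.Iio α = C α := by
  classical
  obtain ⟨e⟩ := SqAux.exists_equiv θ hunc
  have hlim : Order.IsSuccLimit θ.ord := Cardinal.isSuccLimit_ord hunc.le
  obtain ⟨F, hF0, hFup, hFcomp, hFtail, hFdec⟩ :=
    hwc (SqAux.Afam C θ e) (SqAux.Afam_subset C θ e)
  -- basic filter facts
  have hIio : Set.Iio θ.ord ∈ F := by
    have h := hFcomp 0 hlim.pos (fun _ => ∅) (fun i hi => absurd hi (not_lt_zero (a := i)))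
    exact hFup _ h _ Set.inter_subset_left
  have hint : ∀ X ∈ F, ∀ Y ∈ F, (Set.Iio θ.ord ∩ (X ∩ Y)) ∈ F := by
    intro X hX Y hY
    have h2 : (2 : Ordinal.{0}) < θ.ord := by
      have hn : ((2 : ℕ) : Ordinal) < ω := Ordinal.nat_lt_omega0 2
      have hωθ : (ω : Ordinal) ≤ θ.ord := by
        rw [← Cardinal.ord_aleph0]; exact Cardinal.ord_le_ord.mpr hunc.le
      exact lt_of_lt_of_le (by simpa using hn) hωθ
    have h := hFcomp 2 h2 (fun i => if i = 0 then X else Y)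
      (by intro i hi; by_cases h : i = 0 <;> simp [h, hX, hY])
    refine hFup _ h _ ?_
    rintro α ⟨hα1, hα2⟩
    rw [Set.mem_iInter₂] at hα2
    refine ⟨hα1, ?_, ?_⟩
    · have := hα2 0 (by norm_num)
      simpa using this
    · have := hα2 1 (by norm_num)
      simpa using this
  have hne : ∀ X ∈ F, X.Nonempty := by
    intro X hX
    rw [Set.nonempty_iff_ne_empty]
    rintro rfl
    exact hF0 hX
  have hsucclt : ∀ β, β < θ.ord → β + 1 < θ.ord := fun β hβ => by
    rw [Ordinal.add_one_eq_succ]; exact hlim.succ_lt hβ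
  have hself1 : ∀ β : Ordinal.{0}, β < β + 1 := fun β => by
    rw [Ordinal.add_one_eq_succ]; exact Order.lt_succ β
  have hbdd : ∀ γ, γ < θ.ord → ∀ S, S ⊆ Set.Iic γ → S ∉ F := by
    intro γ hγ S hS hSF
    have hT := hFtail (γ + 1) (hsucclt γ hγ)
    have h := hint S hSF _ hT
    have he : (Set.Iio θ.ord ∩ (S ∩ {ξ | γ + 1 ≤ ξ ∧ ξ < θ.ord})) = ∅ := by
      apply Set.eq_empty_iff_forall_notMem.mpr
      rintro x ⟨hx1, hxS, hxT⟩
      have h1 : x ≤ γ := hS hxS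
      have h2 : γ < x := by
        have := hxT.1
        rw [Ordinal.add_one_eq_succ] at this
        exact Order.succ_le_iff.mp this
      exact absurd h2 (not_lt.mpr h1)
    rw [he] at h
    exact hF0 h
  have hdec : ∀ c : SqAux.ICode θ,
      SqAux.interp C θ c ∈ F ∨ (Set.Iio θ.ord \ SqAux.interp C θ c) ∈ F := by
    intro c
    have h := hFdec ((e c : SqAux.II θ) : Ordinal) (e c).2
    rwa [SqAux.Afam_eq C θ e c] at h
  -- the minimal unbounded word
  have hnil : ∀ γ, γ < θ.ord → SqAux.Lset C θ [] γ ∉ F := by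
    intro γ hγ
    apply hbdd γ hγ
    rintro α ⟨h1, h2⟩
    exact h2
  have hωθ : (ω : Ordinal.{0}) < θ.ord := by
    rw [← Cardinal.ord_aleph0]; exact Cardinal.ord_lt_ord.mpr hunc
  have hVmin : ∃ w : List (SqAux.II θ), (∀ γ, γ < θ.ord → SqAux.Lset C θ w γ ∉ F) ∧
      ∀ u : List (SqAux.II θ), (∀ γ, γ < θ.ord → SqAux.Lset C θ u γ ∉ F) →
        {α | α < θ.ord ∧ SqAux.fwI C θ u α < SqAux.fwI C θ w α} ∉ F := by
    by_contra hcon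
    push_neg at hcon
    have hstep : ∀ v : {w : List (SqAux.II θ) // ∀ γ, γ < θ.ord → SqAux.Lset C θ w γ ∉ F},
        ∃ u : {w : List (SqAux.II θ) // ∀ γ, γ < θ.ord → SqAux.Lset C θ w γ ∉ F},
          {α | α < θ.ord ∧ SqAux.fwI C θ u.1 α < SqAux.fwI C θ v.1 α} ∈ F := by
      intro v
      obtain ⟨u, hu1, hu2⟩ := hcon v.1 v.2
      exact ⟨⟨u, hu1⟩, hu2⟩
    choose nxt hnxt using hstep
    set c : ℕ → {w : List (SqAux.II θ) // ∀ γ, γ < θ.ord → SqAux.Lset C θ w γ ∉ F} :=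
      fun n => Nat.rec ⟨[], hnil⟩ (fun _ v => nxt v) n with hc_def
    have hc : ∀ n : ℕ,
        {α | α < θ.ord ∧ SqAux.fwI C θ (c (n+1)).1 α < SqAux.fwI C θ (c n).1 α} ∈ F :=
      fun n => hnxt (c n)
    set g : Ordinal.{0} → Set Ordinal.{0} := fun i =>
      {α | ∀ n : ℕ, (n : Ordinal) = i →
        (α < θ.ord ∧ SqAux.fwI C θ (c (n+1)).1 α < SqAux.fwI C θ (c n).1 α)} with hg_def
    have hg : ∀ i, i < ω → g i ∈ F := by
      intro i hi
      obtain ⟨n, rfl⟩ := Ordinal.lt_omega0.mp hi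
      have he2 : g (n : Ordinal) =
          {α | α < θ.ord ∧ SqAux.fwI C θ (c (n+1)).1 α < SqAux.fwI C θ (c n).1 α} := by
        ext α
        simp only [hg_def, Set.mem_setOf_eq]
        constructor
        · intro h
          exact h n rfl
        · intro h n' hn'
          have hnn : n' = n := by exact_mod_cast hn'
          subst hnn
          exact h
      rw [he2]
      exact hc n
    have hbig := hFcomp ω hωθ g hg
    obtain ⟨α, hα1, hα2⟩ := hne _ hbig
    rw [Set.mem_iInter₂] at hα2
    have hdesc : ∀ n : ℕ, SqAux.fwI C θ (c (n+1)).1 α < SqAux.fwI C θ (c n).1 α := by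
      intro n
      have h3 := hα2 (n : Ordinal) (Ordinal.nat_lt_omega0 n)
      exact (h3 n rfl).2
    have hwf : WellFounded ((· < ·) : Ordinal.{0} → Ordinal.{0} → Prop) :=
      wellFounded_lt
    obtain ⟨x, hx_mem, hx_min⟩ :=
      hwf.has_min (Set.range fun n : ℕ => SqAux.fwI C θ (c n).1 α) ⟨_, ⟨0, rfl⟩⟩
    obtain ⟨n, rfl⟩ := hx_mem
    exact hx_min _ ⟨n + 1, rfl⟩ (hdesc n)
  obtain ⟨w0, hw0U, hw0min⟩ := hVmin
  -- the thread candidate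
  set E : Set Ordinal.{0} := {ξ | ξ < θ.ord ∧ SqAux.Pset C θ w0 ξ ∈ F} with hE_def
  set Dec : Ordinal.{0} → Set Ordinal.{0} := fun ξ =>
    if SqAux.Pset C θ w0 ξ ∈ F then SqAux.Pset C θ w0 ξ
    else Set.Iio θ.ord \ SqAux.Pset C θ w0 ξ with hDec_def
  have hDecF : ∀ ξ, ξ < θ.ord → Dec ξ ∈ F := by
    intro ξ hξ
    by_cases h : SqAux.Pset C θ w0 ξ ∈ F
    · have hDeq : Dec ξ = SqAux.Pset C θ w0 ξ := by rw [hDec_def]; simp [h]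
      rw [hDeq]
      exact h
    · have hDeq : Dec ξ = Set.Iio θ.ord \ SqAux.Pset C θ w0 ξ := by rw [hDec_def]; simp [h]
      rw [hDeq]
      have hd := hdec (false, w0, ⟨ξ, hξ⟩)
      rw [SqAux.interp_false] at hd
      rcases hd with hd | hd
      · exact absurd hd h
      · exact hd
  -- the key reflection lemma
  have hkey : ∀ δ, δ < θ.ord → ∀ G, G ∈ F → ∃ ζ, δ < ζ ∧ ζ < θ.ord ∧
      (∀ ξ, ξ < δ → (ξ ∈ E ↔ ξ ∈ SqAux.Cx C ζ)) ∧
      ∃ α, α ∈ G ∧ α < θ.ord ∧ SqAux.fwI C θ w0 α = ζ := by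
    intro δ hδ G hG
    have h1 := hFcomp δ hδ Dec (fun i hi => hDecF i (lt_trans hi hδ))
    have hLc : (Set.Iio θ.ord \ SqAux.Lset C θ w0 δ) ∈ F := by
      have hd := hdec (true, w0, ⟨δ, hδ⟩)
      rw [SqAux.interp_true] at hd
      rcases hd with hd | hd
      · exact absurd hd (hw0U δ hδ)
      · exact hd
    have h2 := hint _ h1 _ (hint _ hLc _ hG)
    obtain ⟨α, hα0, ⟨hα1, hα2⟩, hα3, hα4, hα5⟩ := hne _ h2
    have hα0' : α < θ.ord := hα0
    have hζθ : SqAux.fwI C θ w0 α < θ.ord :=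
      lt_of_le_of_lt (SqAux.fw_le C hclub _ hα0') hα0'
    have hδζ : δ < SqAux.fwI C θ w0 α :=
      lt_of_not_ge (fun hle => hα4.2 ⟨hα0', hle⟩)
    refine ⟨SqAux.fwI C θ w0 α, hδζ, hζθ, ?_, α, hα5, hα0', rfl⟩
    intro ξ hξδ
    rw [Set.mem_iInter₂] at hα2
    have hαDec : α ∈ Dec ξ := hα2 ξ hξδ
    by_cases h : SqAux.Pset C θ w0 ξ ∈ F
    · have hDeq : Dec ξ = SqAux.Pset C θ w0 ξ := by rw [hDec_def]; simp [h]
      rw [hDeq] at hαDec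
      constructor
      · intro _
        exact hαDec.2
      · intro _
        exact ⟨lt_trans hξδ hδ, h⟩
    · have hDeq : Dec ξ = Set.Iio θ.ord \ SqAux.Pset C θ w0 ξ := by rw [hDec_def]; simp [h]
      rw [hDeq] at hαDec
      constructor
      · intro hξE
        exact absurd hξE.2 h
      · intro hξC
        exact absurd (⟨hα0', hξC⟩ : α ∈ SqAux.Pset C θ w0 ξ) hαDec.2
  -- unboundedness of E
  have hub : ∀ β, β < θ.ord → ∃ ξ, ξ ∈ E ∧ β < ξ := by
    intro β hβ
    have hβ1 := hsucclt β hβ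
    have hru : {α | α < θ.ord ∧ SqAux.fwI C θ (⟨β, hβ⟩ :: w0) α < SqAux.fwI C θ w0 α} ∈ F := by
      have hc1 : (Set.Iio θ.ord \ SqAux.Lset C θ w0 (β + 1)) ∈ F := by
        have hd := hdec (true, w0, ⟨β + 1, hβ1⟩)
        rw [SqAux.interp_true] at hd
        rcases hd with hd | hd
        · exact absurd hd (hw0U _ hβ1)
        · exact hd
      refine hFup _ hc1 _ ?_
      rintro α ⟨hαθ, hnle⟩
      have hαθ' : α < θ.ord := hαθ
      have hζθ : SqAux.fwI C θ w0 α < θ.ord :=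
        lt_of_le_of_lt (SqAux.fw_le C hclub _ hαθ') hαθ'
      have hβζ : β + 1 < SqAux.fwI C θ w0 α :=
        lt_of_not_ge (fun hle => hnle ⟨hαθ', hle⟩)
      have hm := SqAux.mfun_mem C hclub hζθ hβζ
      exact ⟨hαθ', hm.2.2⟩
    have hnotU : ¬ (∀ γ, γ < θ.ord → SqAux.Lset C θ (⟨β, hβ⟩ :: w0) γ ∉ F) :=
      fun h => hw0min _ h hru
    push_neg at hnotU
    obtain ⟨γ, hγθ, hγF⟩ := hnotU
    have hδθ : max (γ + 1) (β + 1) < θ.ord := max_lt (hsucclt γ hγθ) hβ1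
    obtain ⟨ζ, hδζ, hζθ, hiff, α, hαG, hαθ, hζdef⟩ := hkey _ hδθ _ hγF
    have hβζ : β + 1 < ζ := lt_of_le_of_lt (le_max_right _ _) hδζ
    have hm := SqAux.mfun_mem C hclub hζθ hβζ
    have hξγ : SqAux.mfun C β ζ ≤ γ := by
      rw [← hζdef]
      exact hαG.2
    have hξδ : SqAux.mfun C β ζ < max (γ + 1) (β + 1) :=
      lt_of_le_of_lt hξγ (lt_of_lt_of_le (hself1 γ) (le_max_left _ _))
    have hmE : SqAux.mfun C β ζ ∈ E := (hiff _ hξδ).mpr hm.1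
    exact ⟨_, hmE, lt_of_lt_of_le (hself1 β) hm.2.1⟩
  -- closure and coherence
  have hcl : ∀ γ0, γ0 < θ.ord → IsLimitPoint E γ0 → γ0 ∈ E ∧ E ∩ Set.Iio γ0 = C γ0 := by
    intro γ0 hγ0θ hLP
    obtain ⟨ζ, hδζ, hζθ, hiff, -⟩ := hkey (γ0 + 1) (hsucclt γ0 hγ0θ) _ hIio
    have hγ0ζ : γ0 < ζ := lt_trans (hself1 γ0) hδζ
    have hset : E ∩ Set.Iio γ0 = SqAux.Cx C ζ ∩ Set.Iio γ0 := by
      ext ξ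
      constructor
      · rintro ⟨hξE, hξγ⟩
        exact ⟨(hiff ξ (lt_trans hξγ (hself1 γ0))).mp hξE, hξγ⟩
      · rintro ⟨hξC, hξγ⟩
        exact ⟨(hiff ξ (lt_trans hξγ (hself1 γ0))).mpr hξC, hξγ⟩
    have hLPC : IsLimitPoint (SqAux.Cx C ζ) γ0 := ⟨hLP.1, by rw [← hset]; exact hLP.2⟩
    have hζ0 : ζ ≠ 0 := fun h => not_lt_zero (a := γ0) (h ▸ hγ0ζ)
    have hζlim : Order.IsSuccLimit ζ := SqAux.isLimit_of_LP C hζ0 hLPC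
    have hCx : SqAux.Cx C ζ = C ζ := by unfold SqAux.Cx; rw [if_pos hζlim]
    have hLPC' : IsLimitPoint (C ζ) γ0 := hCx ▸ hLPC
    have hγ0C : γ0 ∈ C ζ := (hclub ζ hζθ hζlim).2.2 γ0 hγ0ζ hLPC'
    constructor
    · exact (hiff γ0 (hself1 γ0)).mpr (by rw [hCx]; exact hγ0C)
    · rw [hset, hCx]
      exact (hcoh ζ hζθ hζlim γ0 hγ0ζ hLPC').symm
  refine ⟨E, ⟨fun β hβ => hβ.1, ?_, fun β hβθ hLP => (hcl β hβθ hLP).1⟩,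
    fun α hαθ hLP => (hcl α hαθ hLP).2⟩
  intro ξ hξ
  obtain ⟨b, hbE, hb⟩ := hub ξ hξ
  exact ⟨b, hbE, hb.le⟩
end
end

section
/- Assume the axiom of choice. Let γ be an ordinal with cf(γ) ≥ ω₂ and let ⟨𝒞_α : α < γ, α limit⟩ be a sequence of nonempty sets such that each 𝒞_α is a countable collection of clubs in α, closed under the coherence condition: for C ∈ 𝒞_α and β a limit point of C, C ∩ β ∈ 𝒞_β. Then the sequence has at most countably many threads, where a thread is a club E ⊆ γ with E ∩ α ∈ 𝒞_α for every limit point α of E. -/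
noncomputable section
open Ordinal Set

/-- A coherent multi-sequence with countable entries on an ordinal of cofinality at
least ω₂ has at most countably many threads. -/
theorem countably_many_threads (γ : Ordinal.{0}) (hγ : Cardinal.aleph 2 ≤ γ.cof)
    (𝒞 : Ordinal.{0} → Set (Set Ordinal.{0}))
    (hne : ∀ α, α < γ → Order.IsSuccLimit α → (𝒞 α).Nonempty)
    (hctble : ∀ α, α < γ → Order.IsSuccLimit α → (𝒞 α).Countable)
    (hclub : ∀ α, α < γ → Order.IsSuccLimit α → ∀ C ∈ 𝒞 α, IsClubIn C α)
    (hcoh : ∀ α, α < γ → Order.IsSuccLimit α →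
      ∀ C ∈ 𝒞 α, ∀ β, β < α → IsLimitPoint C β → C ∩ Set.Iio β ∈ 𝒞 β) :
    {E : Set Ordinal.{0} | IsClubIn E γ ∧
      ∀ α, α < γ → IsLimitPoint E α → E ∩ Set.Iio α ∈ 𝒞 α}.Countable := by
  classical
  by_contra hS
  have hγlim : Order.IsSuccLimit γ := Ordinal.aleph0_le_cof.mp ((Cardinal.aleph0_le_aleph 2).trans hγ)
  have hω₁ : (Cardinal.aleph 1) < γ.cof :=
    lt_of_lt_of_le (Cardinal.aleph_lt_aleph.mpr one_lt_two) hγ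
  have hω₀ : Cardinal.aleph0 < γ.cof := Cardinal.aleph0_lt_aleph_one.trans hω₁
  -- extract ℵ₁ many distinct threads
  have h1 : (Cardinal.aleph 1) ≤
      Cardinal.mk {E : Set Ordinal.{0} | IsClubIn E γ ∧
        ∀ α, α < γ → IsLimitPoint E α → E ∩ Set.Iio α ∈ 𝒞 α} :=
    not_lt.mp fun h => hS ((Cardinal.countable_iff_lt_aleph_one _).mpr h)
  set ι : Type := (Cardinal.aleph 1).ord.ToType with hιdef
  have hmkι : Cardinal.mk ι = Cardinal.aleph 1 := by
    rw [hιdef, Cardinal.mk_toType, Cardinal.card_ord]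
  have hne' : Nonempty ι := Cardinal.mk_ne_zero_iff.mp (by
    rw [hmkι]; exact (Cardinal.aleph0_pos.trans Cardinal.aleph0_lt_aleph_one).ne')
  obtain ⟨e⟩ : Nonempty (ι ↪ {E : Set Ordinal.{0} | IsClubIn E γ ∧
      ∀ α, α < γ → IsLimitPoint E α → E ∩ Set.Iio α ∈ 𝒞 α}) := by
    rw [← Cardinal.lift_mk_le', hmkι, Cardinal.lift_aleph, Cardinal.lift_id']
    simpa using h1
  set f : ι → Set Ordinal.{0} := fun i => (e i : Set Ordinal.{0}) with hfdef
  have hfinj : Function.Injective f := fun i j h => e.injective (Subtype.ext h)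
  have hfclub : ∀ i, IsClubIn (f i) γ := fun i => (e i).2.1
  have hfthread : ∀ i, ∀ α, α < γ → IsLimitPoint (f i) α → f i ∩ Set.Iio α ∈ 𝒞 α :=
    fun i => (e i).2.2
  have hι₂ : Cardinal.mk ι < γ.cof := by rw [hmkι]; exact hω₁
  have hιι : Cardinal.mk (ι × ι) < γ.cof := by
    rw [Cardinal.mk_prod, Cardinal.lift_id, hmkι,
      Cardinal.mul_eq_self (Cardinal.aleph0_le_aleph 1)]
    exact hω₁
  -- separating witnesses for distinct threads
  have sep : ∀ p : ι × ι, p.1 ≠ p.2 →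
      ∃ x, x < γ ∧ ¬ (x ∈ f p.1 ↔ x ∈ f p.2) := by
    intro p hp
    have hne2 : f p.1 ≠ f p.2 := fun h => hp (hfinj h)
    obtain ⟨x, hx⟩ := not_forall.mp (fun h => hne2 (Set.ext h))
    by_cases h1 : x ∈ f p.1
    · exact ⟨x, (hfclub p.1).1 x h1, hx⟩
    · have h2 : x ∈ f p.2 := by
        by_contra h2
        exact hx (iff_of_false h1 h2)
      exact ⟨x, (hfclub p.2).1 x h2, hx⟩
  let d : ι × ι → Ordinal.{0} := fun p => if h : p.1 ≠ p.2 then (sep p h).choose else 0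
  have hdγ : ∀ p, d p < γ := by
    intro p; by_cases h : p.1 ≠ p.2
    · simp only [d, dif_pos h]; exact (sep p h).choose_spec.1
    · simp only [d, dif_neg h]; exact hγlim.pos
  set δ : Ordinal.{0} := ⨆ p, d p with hδdef
  have hδγ : δ < γ := Ordinal.iSup_lt_ord hιι hdγ
  have hdδ : ∀ p, d p ≤ δ := fun p => Ordinal.le_iSup d p
  have hsep : ∀ i j, i ≠ j → ∀ β, δ < β → f i ∩ Set.Iio β ≠ f j ∩ Set.Iio β := by
    intro i j hij β hβ heq
    have h := (sep (i, j) hij).choose_spec.2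
    have hxδ : (sep (i, j) hij).choose ≤ δ := by
      have h' := hdδ (i, j)
      simpa only [d, dif_pos (show (i, j).1 ≠ (i, j).2 from hij)] using h'
    have hxβ : (sep (i, j) hij).choose < β := lt_of_le_of_lt hxδ hβ
    apply h
    constructor
    · intro hxi
      have hmem : (sep (i, j) hij).choose ∈ f i ∩ Set.Iio β := ⟨hxi, hxβ⟩
      rw [heq] at hmem; exact hmem.1
    · intro hxj
      have hmem : (sep (i, j) hij).choose ∈ f j ∩ Set.Iio β := ⟨hxj, hxβ⟩
      rw [← heq] at hmem; exact hmem.1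
  -- next-element function for each thread
  let nxt : ι → Ordinal.{0} → Ordinal.{0} := fun i ξ =>
    if h : ξ < γ then ((hfclub i).2.1 ξ h).choose else 0
  have hnxt : ∀ i ξ, ξ < γ → nxt i ξ ∈ f i ∧ ξ ≤ nxt i ξ := by
    intro i ξ h
    simp only [nxt, dif_pos h]
    obtain ⟨h1, h2⟩ := ((hfclub i).2.1 ξ h).choose_spec
    exact ⟨h1, h2⟩
  let g : Ordinal.{0} → Ordinal.{0} := fun ξ => Order.succ (⨆ i, nxt i ξ)
  have hgsup : ∀ ξ, ξ < γ → (⨆ i, nxt i ξ) < γ := fun ξ h =>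
    Ordinal.iSup_lt_ord hι₂ (fun i => (hfclub i).1 _ (hnxt i ξ h).1)
  have hgγ : ∀ ξ, ξ < γ → g ξ < γ := fun ξ h => hγlim.succ_lt (hgsup ξ h)
  have hglt : ∀ ξ, ξ < γ → ξ < g ξ := by
    intro ξ h
    obtain ⟨i⟩ := hne'
    calc ξ ≤ nxt i ξ := (hnxt i ξ h).2
    _ ≤ ⨆ j, nxt j ξ := Ordinal.le_iSup _ i
    _ < g ξ := Order.lt_succ _
  -- the ω-sequence whose supremum is the desired common limit point
  let ξs : ℕ → Ordinal.{0} := fun n => n.rec (Order.succ δ) (fun _ ih => g ih)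
  have hξγ : ∀ n, ξs n < γ := by
    intro n
    induction n with
    | zero => exact hγlim.succ_lt hδγ
    | succ n ih => exact hgγ _ ih
  have hξmono : ∀ n, ξs n < ξs (n + 1) := fun n => hglt _ (hξγ n)
  set α : Ordinal.{0} := ⨆ n, ξs n with hαdef
  have hαγ : α < γ := Ordinal.iSup_lt_ord (by rw [Cardinal.mk_nat]; exact hω₀) hξγ
  have hξα : ∀ n, ξs n < α := fun n => lt_of_lt_of_le (hξmono n) (Ordinal.le_iSup ξs (n + 1))
  have hδα : δ < α := lt_of_lt_of_le (Order.lt_succ δ) (le_of_lt (hξα 0))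
  have h0α : 0 < α := lt_of_le_of_lt (zero_le (a := δ)) hδα
  -- α is a limit point of each thread
  have hαlp : ∀ i, IsLimitPoint (f i) α := by
    intro i
    refine ⟨h0α, le_antisymm ?_ ?_⟩
    · rw [hαdef]
      refine Ordinal.iSup_le fun n => ?_
      have hx : nxt i (ξs n) ∈ f i ∧ ξs n ≤ nxt i (ξs n) := hnxt i (ξs n) (hξγ n)
      have hxα : nxt i (ξs n) < α := by
        calc nxt i (ξs n) ≤ ⨆ j, nxt j (ξs n) := Ordinal.le_iSup _ i
        _ < ξs (n + 1) := Order.lt_succ _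
        _ < α := hξα (n + 1)
      exact le_trans hx.2 (le_csSup ⟨α, fun x hx' => le_of_lt hx'.2⟩ ⟨hx.1, hxα⟩)
    · exact csSup_le' (fun x hx => le_of_lt hx.2)
  -- α is a limit ordinal
  have hαlim : Order.IsSuccLimit α := by
    refine Ordinal.isSuccLimit_iff.mpr ⟨h0α.ne', Order.isSuccPrelimit_of_succ_lt fun β hβ => ?_⟩
    rw [hαdef] at hβ
    obtain ⟨n, hn⟩ := Ordinal.lt_iSup_iff.mp hβ
    exact lt_of_le_of_lt (Order.succ_le_of_lt hn) (hξα n)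
  -- the traces at α are ℵ₁ many distinct elements of the countable set 𝒞 α
  have hmem : ∀ i, f i ∩ Set.Iio α ∈ 𝒞 α := fun i => hfthread i α hαγ (hαlp i)
  have hinj2 : Function.Injective (fun i => (⟨f i ∩ Set.Iio α, hmem i⟩ : ↥(𝒞 α))) := by
    intro i j h
    by_contra hij
    exact hsep i j hij α hδα (congrArg Subtype.val h)
  have hcnt : Countable ↥(𝒞 α) := (hctble α hαγ hαlim).to_subtype
  have hcι : Countable ι := hinj2.countable
  have hle : Cardinal.mk ι ≤ Cardinal.aleph0 := Cardinal.mk_le_aleph0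
  rw [hmkι] at hle
  exact absurd hle (not_le.mpr Cardinal.aleph0_lt_aleph_one)
end
end

section
/- Let κ be an infinite cardinal and suppose there is a sequence ⟨C_τ : τ < κ⁺, τ limit⟩ such that: each C_τ is club in τ; C_σ = C_τ ∩ σ for every limit point σ of C_τ; C_τ = τ (as a set of ordinals) whenever τ ≤ κ is a limit ordinal; and otp(C_τ) < τ whenever κ < τ < κ⁺. Then □_κ holds: defining recursively c_τ = π_τ[c_{otp(C_τ)}] where π_τ : otp(C_τ) → C_τ is the order isomorphism (and c_τ = C_τ for τ ≤ κ), the sequence ⟨c_τ : τ < κ⁺, τ limit⟩ satisfies: each c_τ is club in τ, c_σ = c_τ ∩ σ for every limit point σ of c_τ, and otp(c_τ) ≤ κ. -/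
noncomputable section
open Ordinal Set

namespace JensenAux

lemma otp_Iio (a : Ordinal.{0}) : otp (Set.Iio a) = Ordinal.lift.{1} a :=
  typein_ordinal a

lemma otp_mono {Cs D : Set Ordinal.{0}} (h : Cs ⊆ D) : otp Cs ≤ otp D :=
  RelEmbedding.ordinal_type_le ⟨⟨Set.inclusion h, Set.inclusion_injective h⟩, Iff.rfl⟩

lemma otp_le_of_bdd {Cs : Set Ordinal.{0}} {τ : Ordinal.{0}} (h : ∀ β ∈ Cs, β < τ) :
    otp Cs ≤ Ordinal.lift.{1} τ := by
  rw [← otp_Iio]; exact otp_mono h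

lemma otp_image {f : Ordinal.{0} → Ordinal.{0}} {s : Set Ordinal.{0}}
    (hf : StrictMonoOn f s) : otp (f '' s) = otp s := by
  have e : ((· < ·) : s → s → Prop) ≃r ((· < ·) : (f '' s) → (f '' s) → Prop) :=
    ⟨Equiv.Set.imageOfInjOn f s hf.injOn, by
      rintro ⟨a, ha⟩ ⟨b, hb⟩
      simp [Equiv.Set.imageOfInjOn, Subtype.mk_lt_mk, hf.lt_iff_lt ha hb]⟩
  exact e.ordinal_type_eq.symm

open scoped Classical in
/-- The order type of a (bounded) set of ordinals, as a small ordinal. -/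
def oL (Cs : Set Ordinal.{0}) : Ordinal.{0} :=
  if h : ∃ a : Ordinal.{0}, Ordinal.lift.{1} a = otp Cs then h.choose else 0

lemma oL_spec {Cs : Set Ordinal.{0}} {τ : Ordinal.{0}} (h : ∀ β ∈ Cs, β < τ) :
    Ordinal.lift.{1} (oL Cs) = otp Cs := by
  have hex : ∃ a : Ordinal.{0}, Ordinal.lift.{1} a = otp Cs :=
    Ordinal.mem_range_lift_of_le (otp_le_of_bdd h)
  classical
  rw [oL]
  rw [dif_pos hex]
  exact hex.choose_spec

/-- The canonical enumeration of a set of ordinals. -/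
def enumC (Cs : Set Ordinal.{0}) (ξ : Ordinal.{0}) : Ordinal.{0} :=
  if h : Ordinal.lift.{1} ξ < otp Cs then
    (Ordinal.enum ((· < ·) : Cs → Cs → Prop) ⟨Ordinal.lift.{1} ξ, h⟩ : Cs).1
  else 0

lemma enumC_mem {Cs : Set Ordinal.{0}} {ξ : Ordinal.{0}}
    (h : Ordinal.lift.{1} ξ < otp Cs) : enumC Cs ξ ∈ Cs := by
  rw [enumC, dif_pos h]
  exact (Ordinal.enum ((· < ·) : Cs → Cs → Prop) ⟨Ordinal.lift.{1} ξ, h⟩).2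

lemma enumC_lt_enumC {Cs : Set Ordinal.{0}} {ξ η : Ordinal.{0}}
    (hξ : Ordinal.lift.{1} ξ < otp Cs) (hη : Ordinal.lift.{1} η < otp Cs) :
    enumC Cs ξ < enumC Cs η ↔ ξ < η := by
  rw [enumC, enumC, dif_pos hξ, dif_pos hη]
  have h := @Ordinal.enum_lt_enum _ ((· < ·) : Cs → Cs → Prop) _
    ⟨Ordinal.lift.{1} ξ, hξ⟩ ⟨Ordinal.lift.{1} η, hη⟩
  exact (Subtype.coe_lt_coe.trans h).trans (Subtype.mk_lt_mk.trans Ordinal.lift_lt)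

lemma enumC_surj {Cs : Set Ordinal.{0}} {τ : Ordinal.{0}} (hbd : ∀ β ∈ Cs, β < τ)
    {γ : Ordinal.{0}} (hγ : γ ∈ Cs) :
    ∃ ξ : Ordinal.{0}, Ordinal.lift.{1} ξ < otp Cs ∧ enumC Cs ξ = γ := by
  have h1 : Ordinal.typein ((· < ·) : Cs → Cs → Prop) ⟨γ, hγ⟩ < otp Cs :=
    Ordinal.typein_lt_type _ _
  obtain ⟨ξ, hξ⟩ := Ordinal.mem_range_lift_of_le (h1.le.trans (otp_le_of_bdd hbd))
  refine ⟨ξ, hξ ▸ h1, ?_⟩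
  rw [enumC, dif_pos (hξ ▸ h1)]
  simp only [hξ]
  rw [Ordinal.enum_typein]

lemma enumC_strictMonoOn {Cs : Set Ordinal.{0}} {τ : Ordinal.{0}} (hbd : ∀ β ∈ Cs, β < τ) :
    StrictMonoOn (enumC Cs) (Set.Iio (oL Cs)) := by
  intro a ha b hb hab
  have ho := oL_spec hbd
  have ha' : Ordinal.lift.{1} a < otp Cs := by rw [← ho, Ordinal.lift_lt]; exact ha
  have hb' : Ordinal.lift.{1} b < otp Cs := by rw [← ho, Ordinal.lift_lt]; exact hb
  exact (enumC_lt_enumC ha' hb').2 hab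

lemma enumC_image {Cs : Set Ordinal.{0}} {τ : Ordinal.{0}} (hbd : ∀ β ∈ Cs, β < τ) :
    enumC Cs '' Set.Iio (oL Cs) = Cs := by
  have ho := oL_spec hbd
  apply Set.Subset.antisymm
  · rintro _ ⟨ξ, hξ, rfl⟩
    exact enumC_mem (by rw [← ho, Ordinal.lift_lt]; exact hξ)
  · intro γ hγ
    obtain ⟨ξ, h1, h2⟩ := enumC_surj hbd hγ
    exact ⟨ξ, by rw [← ho, Ordinal.lift_lt] at h1; exact h1, h2⟩

lemma le_apply {π : Ordinal.{0} → Ordinal.{0}} {o : Ordinal.{0}}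
    (hmono : StrictMonoOn π (Set.Iio o)) : ∀ ξ, ξ < o → ξ ≤ π ξ := by
  intro ξ
  induction ξ using Ordinal.induction with
  | _ ξ IH =>
    intro hξ
    by_contra hlt
    push_neg at hlt
    have h1 : π ξ < o := hlt.trans hξ
    have h2 := IH (π ξ) hlt h1
    exact absurd (h2.trans_lt (hmono h1 hξ hlt)) (lt_irrefl _)

lemma image_inter {π : Ordinal.{0} → Ordinal.{0}} {o : Ordinal.{0}} {S : Set Ordinal.{0}}
    {δ : Ordinal.{0}} (hmono : StrictMonoOn π (Set.Iio o)) (hS : S ⊆ Set.Iio o) (hδ : δ < o) :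
    π '' (S ∩ Set.Iio δ) = (π '' S) ∩ Set.Iio (π δ) := by
  ext x
  constructor
  · rintro ⟨y, ⟨hyS, hy⟩, rfl⟩
    exact ⟨⟨y, hyS, rfl⟩, hmono (hS hyS) hδ hy⟩
  · rintro ⟨⟨y, hyS, rfl⟩, hx⟩
    exact ⟨y, ⟨hyS, (hmono.lt_iff_lt (hS hyS) hδ).1 hx⟩, rfl⟩

lemma limpt_nonempty {S : Set Ordinal.{0}} {β : Ordinal.{0}} (h : IsLimitPoint S β) :
    (S ∩ Set.Iio β).Nonempty := by
  obtain ⟨h0, hsup⟩ := h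
  by_contra hemp
  rw [Set.not_nonempty_iff_eq_empty] at hemp
  rw [hemp, csSup_empty, Ordinal.bot_eq_zero] at hsup
  exact h0.ne' hsup

lemma limpt_isLimit {S : Set Ordinal.{0}} {β : Ordinal.{0}} (h : IsLimitPoint S β) :
    Order.IsSuccLimit β := by
  have hne := limpt_nonempty h
  obtain ⟨h0, hsup⟩ := h
  rcases Ordinal.zero_or_succ_or_isSuccLimit β with h' | ⟨γ, rfl⟩ | h'
  · exact absurd h' h0.ne'
  · exfalso
    have hle : sSup (S ∩ Set.Iio (Order.succ γ)) ≤ γ :=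
      csSup_le hne fun x hx => Order.lt_succ_iff.1 hx.2
    exact absurd (hsup.le.trans hle) (not_le.2 (Order.lt_succ γ))
  · exact h'

lemma limpt_mono {S T : Set Ordinal.{0}} {β : Ordinal.{0}} (hST : S ⊆ T)
    (h : IsLimitPoint S β) : IsLimitPoint T β := by
  have hne := limpt_nonempty h
  obtain ⟨h0, hsup⟩ := h
  refine ⟨h0, le_antisymm ?_ ?_⟩
  · calc β = sSup (S ∩ Set.Iio β) := hsup
      _ ≤ sSup (T ∩ Set.Iio β) :=
        csSup_le_csSup ⟨β, fun x hx => hx.2.le⟩ hne (Set.inter_subset_inter_left _ hST)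
  · exact csSup_le (hne.mono (Set.inter_subset_inter_left _ hST)) fun x hx => hx.2.le

lemma limpt_reflect {π : Ordinal.{0} → Ordinal.{0}} {o : Ordinal.{0}} {S : Set Ordinal.{0}}
    {b : Ordinal.{0}} (hmono : StrictMonoOn π (Set.Iio o)) (hS : S ⊆ Set.Iio o) (hb : b < o)
    (h : IsLimitPoint (π '' S) (π b)) : IsLimitPoint S b := by
  have hne := limpt_nonempty h
  obtain ⟨h0, hsup⟩ := h
  obtain ⟨γ, ⟨y, hyS, rfl⟩, hγlt⟩ := hne
  have hyb : y < b := (hmono.lt_iff_lt (hS hyS) hb).1 hγlt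
  have hne' : (S ∩ Set.Iio b).Nonempty := ⟨y, hyS, hyb⟩
  refine ⟨lt_of_le_of_lt (zero_le : 0 ≤ y) hyb, le_antisymm ?_ ?_ |>.symm⟩
  · exact csSup_le hne' fun x hx => hx.2.le
  · by_contra hlt
    push_neg at hlt
    set s := sSup (S ∩ Set.Iio b) with hs
    have hso : s < o := hlt.trans hb
    have hkey : ∀ γ ∈ (π '' S) ∩ Set.Iio (π b), γ ≤ π s := by
      rintro _ ⟨⟨y', hy'S, rfl⟩, hy'lt⟩
      have hy'b : y' < b := (hmono.lt_iff_lt (hS hy'S) hb).1 hy'lt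
      have hy's : y' ≤ s := le_csSup ⟨b, fun x hx => hx.2.le⟩ ⟨hy'S, hy'b⟩
      exact hmono.monotoneOn (hS hy'S) hso hy's
    have h1 : π b ≤ π s := hsup.le.trans (csSup_le ⟨π y, ⟨y, hyS, rfl⟩, hγlt⟩ hkey)
    exact absurd (h1.trans_lt (hmono hso hb hlt)) (lt_irrefl _)

lemma enum_unique {f g : Ordinal.{0} → Ordinal.{0}} {a : Ordinal.{0}}
    (hf : StrictMonoOn f (Set.Iio a)) (hg : StrictMonoOn g (Set.Iio a))
    (him : f '' Set.Iio a = g '' Set.Iio a) : Set.EqOn f g (Set.Iio a) := by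
  suffices H : ∀ f g : Ordinal.{0} → Ordinal.{0}, StrictMonoOn f (Set.Iio a) →
      StrictMonoOn g (Set.Iio a) → f '' Set.Iio a = g '' Set.Iio a →
      ∀ ξ ∈ Set.Iio a, f ξ ≤ g ξ by
    intro ξ hξ
    exact le_antisymm (H f g hf hg him ξ hξ) (H g f hg hf him.symm ξ hξ)
  clear hf hg him f g
  intro f g hf hg him ξ
  induction ξ using Ordinal.induction with
  | _ ξ IH =>
    intro hξ
    by_contra hlt
    push_neg at hlt
    have hmem : g ξ ∈ f '' Set.Iio a := him ▸ Set.mem_image_of_mem g hξ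
    obtain ⟨δ, hδ, hfδ⟩ := hmem
    have hδξ : δ < ξ := by
      by_contra hge
      push_neg at hge
      have h1 : f ξ ≤ f δ := hf.monotoneOn hξ hδ hge
      rw [hfδ] at h1
      exact absurd h1 (not_le.2 hlt)
    have h2 := IH δ hδξ (hδξ.trans hξ)
    have h3 : g δ < g ξ := hg (hδξ.trans hξ) hξ hδξ
    rw [hfδ] at h2
    exact absurd (h2.trans_lt h3) (lt_irrefl _)

/-- Jensen's recursive definition of the square sequence. -/
def cdef (C : Ordinal.{0} → Set Ordinal.{0}) (κo : Ordinal.{0}) (τ : Ordinal.{0}) :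
    Set Ordinal.{0} :=
  if h : κo < τ ∧ oL (C τ) < τ then enumC (C τ) '' cdef C κo (oL (C τ)) else C τ
termination_by τ
decreasing_by exact h.2

lemma cdef_of_le {C : Ordinal.{0} → Set Ordinal.{0}} {κo τ : Ordinal.{0}} (h : τ ≤ κo) :
    cdef C κo τ = C τ := by
  rw [cdef, dif_neg]
  rintro ⟨h1, -⟩
  exact absurd h (not_le.2 h1)

lemma cdef_of_lt {C : Ordinal.{0} → Set Ordinal.{0}} {κo τ : Ordinal.{0}} (h1 : κo < τ)
    (h2 : oL (C τ) < τ) : cdef C κo τ = enumC (C τ) '' cdef C κo (oL (C τ)) := by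
  rw [cdef, dif_pos ⟨h1, h2⟩]

end JensenAux

open JensenAux

/-- Jensen's recursion: a coherent club sequence on κ⁺ that is trivial up to κ and has
order types below the index above κ can be converted, by copying along the order
isomorphisms π_τ : otp(C_τ) → C_τ, into a genuine □_κ-sequence. -/
theorem jensen_recursion (κ : Cardinal.{0}) (hκ : Cardinal.aleph0 ≤ κ)
    (C : Ordinal.{0} → Set Ordinal.{0})
    (hclub : ∀ τ, τ < (Order.succ κ).ord → Order.IsSuccLimit τ → IsClubIn (C τ) τ)
    (hcoh : ∀ τ, τ < (Order.succ κ).ord → Order.IsSuccLimit τ →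
      ∀ σ, σ < τ → IsLimitPoint (C τ) σ → C σ = C τ ∩ Set.Iio σ)
    (hlow : ∀ τ, τ ≤ κ.ord → Order.IsSuccLimit τ → C τ = Set.Iio τ)
    (hotp : ∀ τ, κ.ord < τ → τ < (Order.succ κ).ord → Order.IsSuccLimit τ →
      otp (C τ) < Ordinal.lift.{1} τ) :
    ∃ c : Ordinal.{0} → Set Ordinal.{0},
      (∀ τ, τ ≤ κ.ord → Order.IsSuccLimit τ → c τ = C τ) ∧
      (∀ τ, κ.ord < τ → τ < (Order.succ κ).ord → Order.IsSuccLimit τ →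
        ∃ π : Ordinal.{0} → Ordinal.{0}, ∃ o : Ordinal.{0},
          Ordinal.lift.{1} o = otp (C τ) ∧
          StrictMonoOn π (Set.Iio o) ∧ π '' Set.Iio o = C τ ∧
          c τ = π '' (c o)) ∧
      (∀ τ, τ < (Order.succ κ).ord → Order.IsSuccLimit τ →
        IsClubIn (c τ) τ ∧ otp (c τ) ≤ Ordinal.lift.{1} κ.ord ∧
        ∀ σ, σ < τ → IsLimitPoint (c τ) σ → c σ = c τ ∩ Set.Iio σ) := by
  set c : Ordinal.{0} → Set Ordinal.{0} := cdef C κ.ord with hc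
  have hcle : ∀ σ : Ordinal.{0}, σ ≤ κ.ord → c σ = C σ := by
    intro σ h; rw [hc]; exact cdef_of_le h
  have hclt : ∀ σ : Ordinal.{0}, κ.ord < σ → oL (C σ) < σ →
      c σ = enumC (C σ) '' c (oL (C σ)) := by
    intro σ h1 h2; rw [hc]; exact cdef_of_lt h1 h2
  have main : ∀ τ, τ < (Order.succ κ).ord → Order.IsSuccLimit τ →
      IsClubIn (c τ) τ ∧ otp (c τ) ≤ Ordinal.lift.{1} κ.ord ∧
      ∀ σ, σ < τ → IsLimitPoint (c τ) σ → c σ = c τ ∩ Set.Iio σ := by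
    intro τ
    induction τ using Ordinal.induction with
    | _ τ IH =>
      intro hτs hτl
      rcases le_or_gt τ κ.ord with hle | hgt
      · -- base case : τ ≤ κ.ord
        have hcC : c τ = C τ := hcle τ hle
        refine ⟨hcC ▸ hclub τ hτs hτl, ?_, ?_⟩
        · rw [hcC, hlow τ hle hτl, otp_Iio]
          exact Ordinal.lift_le.2 hle
        · intro σ hσ hlp
          have hσle : σ ≤ κ.ord := hσ.le.trans hle
          rw [hcle σ hσle, hcC]
          rw [hcC] at hlp
          exact hcoh τ hτs hτl σ hσ hlp
      · -- main case : κ.ord < τ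
        obtain ⟨hbd, hub, hcl⟩ := hclub τ hτs hτl
        set o := oL (C τ) with hodef
        set π := enumC (C τ) with hπdef
        have ho : Ordinal.lift.{1} o = otp (C τ) := oL_spec hbd
        have hoτ : o < τ := by
          have h := hotp τ hgt hτs hτl
          rw [← ho, Ordinal.lift_lt] at h
          exact h
        have hπm : StrictMonoOn π (Set.Iio o) := enumC_strictMonoOn hbd
        have hπim : π '' Set.Iio o = C τ := enumC_image hbd
        have hcτ : c τ = π '' c o := hclt τ hgt hoτ
        have honz : o ≠ 0 := by
          obtain ⟨β, hβC, -⟩ := hub 0 hτl.pos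
          intro h0
          rw [h0] at hπim
          have hIio0 : Set.Iio (0 : Ordinal.{0}) = ∅ :=
            Set.eq_empty_iff_forall_notMem.2 fun x hx => (not_lt_zero (a := x)) hx
          rw [hIio0, Set.image_empty] at hπim
          exact absurd (hπim ▸ hβC) (Set.notMem_empty β)
        have holim : Order.IsSuccLimit o := by
          refine Ordinal.isSuccLimit_iff.2 ⟨honz, Order.isSuccPrelimit_of_succ_lt fun a ha => ?_⟩
          have haC : π a ∈ C τ := hπim ▸ Set.mem_image_of_mem π ha
          have h1 : π a < τ := hbd _ haC
          obtain ⟨β, hβC, hβge⟩ := hub (Order.succ (π a)) (hτl.succ_lt h1)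
          rw [← hπim] at hβC
          obtain ⟨b, hb, rfl⟩ := hβC
          have hab : a < b :=
            (hπm.lt_iff_lt ha hb).1 ((Order.lt_succ (π a)).trans_le hβge)
          exact lt_of_le_of_lt (Order.succ_le_of_lt hab) hb
        obtain ⟨⟨hobd, houb, hocl⟩, hootp, hocoh⟩ := IH o hoτ (hoτ.trans hτs) holim
        have hco_sub : c o ⊆ Set.Iio o := fun x hx => hobd x hx
        have hcτCτ : c τ ⊆ C τ := by
          intro x hx
          rw [hcτ] at hx
          obtain ⟨y, hy, rfl⟩ := hx
          rw [← hπim]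
          exact Set.mem_image_of_mem π (hco_sub hy)
        have hreflect : ∀ β, β < τ → IsLimitPoint (c τ) β →
            ∃ b, b < o ∧ π b = β ∧ IsLimitPoint (c o) b := by
          intro β hβτ hβ
          have hβC : IsLimitPoint (C τ) β := limpt_mono hcτCτ hβ
          have hβmem : β ∈ C τ := hcl β hβτ hβC
          rw [← hπim] at hβmem
          obtain ⟨b, hb, rfl⟩ := hβmem
          refine ⟨b, hb, rfl, limpt_reflect hπm hco_sub hb ?_⟩
          rw [← hcτ]
          exact hβ
        refine ⟨⟨?_, ?_, ?_⟩, ?_, ?_⟩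
        · intro β hβ
          exact hbd β (hcτCτ hβ)
        · intro ξ hξ
          obtain ⟨γ, hγC, hγge⟩ := hub ξ hξ
          rw [← hπim] at hγC
          obtain ⟨d, hd, rfl⟩ := hγC
          obtain ⟨d', hd'c, hd'ge⟩ := houb d hd
          refine ⟨π d', ?_, ?_⟩
          · rw [hcτ]
            exact Set.mem_image_of_mem π hd'c
          · exact hγge.trans (hπm.monotoneOn hd (hco_sub hd'c) hd'ge)
        · intro β hβτ hβlp
          obtain ⟨b, hb, rfl, hblp⟩ := hreflect β hβτ hβlp
          rw [hcτ]
          exact Set.mem_image_of_mem π (hocl b hb hblp)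
        · rw [hcτ, otp_image (hπm.mono hco_sub)]
          exact hootp
        · intro σ hστ hσlp
          obtain ⟨b, hb, hπb, hblp⟩ := hreflect σ hστ hσlp
          subst hπb
          have hbσ : b ≤ π b := le_apply hπm b hb
          have hσC : IsLimitPoint (C τ) (π b) := limpt_mono hcτCτ hσlp
          have hCσ : C (π b) = C τ ∩ Set.Iio (π b) := hcoh τ hτs hτl (π b) hστ hσC
          have hsubb : Set.Iio b ⊆ Set.Iio o := fun x hx => hx.trans hb
          have hCσim : C (π b) = π '' Set.Iio b := by
            rw [hCσ, ← hπim, ← image_inter hπm subset_rfl hb, Set.Iio_inter_Iio,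
              min_eq_right hb.le]
          have hbound : ∀ x ∈ C (π b), x < π b := by
            intro x hx
            rw [hCσ] at hx
            exact hx.2
          have hoLσ : oL (C (π b)) = b := by
            have h1 : Ordinal.lift.{1} (oL (C (π b))) = otp (C (π b)) := oL_spec hbound
            have h2 : otp (C (π b)) = Ordinal.lift.{1} b := by
              rw [hCσim, otp_image (hπm.mono hsubb), otp_Iio]
            exact Ordinal.lift_inj.1 (h1.trans h2)
          have hcb : c b = c o ∩ Set.Iio b := hocoh b hb hblp
          have hcb_sub : c b ⊆ Set.Iio b := by
            rw [hcb]
            exact Set.inter_subset_right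
          rcases le_or_gt (π b) κ.ord with hσκ | hσκ
          · -- σ = π b ≤ κ.ord
            have hbκ : b ≤ κ.ord := hbσ.trans hσκ
            have hblim : Order.IsSuccLimit b := limpt_isLimit hblp
            have h1 : c (π b) = C (π b) := hcle (π b) hσκ
            have h3 : c b = Set.Iio b := by
              rw [hcle b hbκ, hlow b hbκ hblim]
            rw [h1, hCσim, hcτ, ← image_inter hπm hco_sub hb, ← hcb, h3]
          · -- κ.ord < π b
            have hσlim : Order.IsSuccLimit (π b) := limpt_isLimit hσlp
            have hbb : b < π b := by
              have h := hotp (π b) hσκ (hστ.trans hτs) hσlim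
              rw [hCσim, otp_image (hπm.mono hsubb), otp_Iio, Ordinal.lift_lt] at h
              exact h
            have h1 : c (π b) = enumC (C (π b)) '' c (oL (C (π b))) := by
              apply hclt (π b) hσκ
              rw [hoLσ]
              exact hbb
            rw [hoLσ] at h1
            have hmono2 : StrictMonoOn (enumC (C (π b))) (Set.Iio b) := by
              have := enumC_strictMonoOn hbound
              rwa [hoLσ] at this
            have him2 : enumC (C (π b)) '' Set.Iio b = C (π b) := by
              have := enumC_image hbound
              rwa [hoLσ] at this
            have heq : Set.EqOn (enumC (C (π b))) π (Set.Iio b) :=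
              enum_unique hmono2 (hπm.mono hsubb) (him2.trans hCσim)
            have h2 : enumC (C (π b)) '' c b = π '' c b := (heq.mono hcb_sub).image_eq
            rw [h1, h2, hcb, image_inter hπm hco_sub hb, ← hcτ]
  refine ⟨c, fun τ hle _ => hcle τ hle, ?_, main⟩
  intro τ hgt hlt hlim
  obtain ⟨hbd, -, -⟩ := hclub τ hlt hlim
  have ho : Ordinal.lift.{1} (oL (C τ)) = otp (C τ) := oL_spec hbd
  have hoτ : oL (C τ) < τ := by
    have h := hotp τ hgt hlt hlim
    rw [← ho, Ordinal.lift_lt] at h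
    exact h
  exact ⟨enumC (C τ), oL (C τ), ho, enumC_strictMonoOn hbd, enumC_image hbd,
    hclt τ hgt hoτ⟩
end
end
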